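/- arXiv:1804.02242 — 10 statements merged into one kernel-verified Lean document; each statement's English description precedes it below -/
import Mathlib

section
/- Let G=(V,E) be a finite simple undirected graph, let x : E → ℝ≥0 satisfy ∑_{e ∈ δ(v)} x_e ≤ 1 for every vertex v ∈ V, and let A be a random subset of V whose distribution satisfies (i) Pr[v ∈ A] = ∑_{e ∈ δ(v)} x_e for every v ∈ V, and (ii) Pr[u ∈ A and v ∈ A] = Pr[u ∈ A] · Pr[v ∈ A] for every edge {u,v} ∈ E. Then there exists a matching M ⊆ E of G such that E[ |{ e ∈ M : both endpoints of e lie in A }| ] ≥ (∑_{e ∈ E} x_e)² / |V|. -/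
open Finset

/-!
Write `y v = Pr[v ∈ A]`; by the independence hypothesis an edge `uv` lies inside `A` with
probability `y u * y v`, so it suffices to find a matching `M` with
`x(E)² ≤ |V| · ∑_{uv ∈ M} y u y v`. Give the edge `uv` the cost `1/y u + 1/y v`; since
`x(δ(v)) = y v`, the `x`-weighted total cost is at most `|V|`. Greedily pick an edge `ab` of
maximal `y a y b` and delete all edges meeting it. Every deleted edge of positive `x`-weight
costs at least `1/y a + 1/y b`, while the deleted weight is at most `y a + y b`; this gives
`x(K)² ≤ cost(K) · y a y b` for the deleted set `K`, and these per-step bounds add up by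
Cauchy–Schwarz.
-/

section EdgeFunctions

variable {V : Type*}

noncomputable def edgeProd (y : V → ℝ) : Sym2 V → ℝ :=
  Sym2.lift ⟨fun u v => y u * y v, fun _ _ => mul_comm _ _⟩

-- `(y v)⁻¹ = 0` when `y v = 0`; the edges at such a vertex carry no `x`-weight.
noncomputable def edgeInvSum (y : V → ℝ) : Sym2 V → ℝ :=
  Sym2.lift ⟨fun u v => (y u)⁻¹ + (y v)⁻¹, fun _ _ => add_comm _ _⟩

@[simp]
lemma edgeProd_mk (y : V → ℝ) (u v : V) : edgeProd y s(u, v) = y u * y v := rfl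

@[simp]
lemma edgeInvSum_mk (y : V → ℝ) (u v : V) : edgeInvSum y s(u, v) = (y u)⁻¹ + (y v)⁻¹ := rfl

lemma edgeProd_nonneg {y : V → ℝ} (hy : ∀ v, 0 ≤ y v) (e : Sym2 V) : 0 ≤ edgeProd y e := by
  induction e using Sym2.ind with
  | _ u v => exact mul_nonneg (hy u) (hy v)

lemma edgeInvSum_nonneg {y : V → ℝ} (hy : ∀ v, 0 ≤ y v) (e : Sym2 V) : 0 ≤ edgeInvSum y e := by
  induction e using Sym2.ind with
  | _ u v => exact add_nonneg (inv_nonneg.2 (hy u)) (inv_nonneg.2 (hy v))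

lemma sq_le_edgeProd {y : V → ℝ} {e : Sym2 V} {c : ℝ} (hc : 0 ≤ c) (hcy : ∀ v ∈ e, c ≤ y v) :
    c ^ 2 ≤ edgeProd y e := by
  induction e using Sym2.ind with
  | _ u v =>
    rw [Sym2.forall_mem_pair] at hcy
    rw [sq, edgeProd_mk]
    exact mul_le_mul hcy.1 hcy.2 hc (hc.trans hcy.1)

lemma edgeInvSum_le_of_edgeProd_le {y : V → ℝ} {a b : V} {e : Sym2 V} (ha : a ∈ e)
    (hpos : ∀ v ∈ e, 0 < y v) (hle : edgeProd y e ≤ y a * y b) :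
    edgeInvSum y s(a, b) ≤ edgeInvSum y e := by
  obtain ⟨z, rfl⟩ : ∃ z, s(a, z) = e := ⟨_, Sym2.other_spec ha⟩
  rw [Sym2.forall_mem_pair] at hpos
  rw [edgeProd_mk] at hle
  rw [edgeInvSum_mk, edgeInvSum_mk]
  exact add_le_add_right (inv_anti₀ hpos.2 (le_of_mul_le_mul_left hle hpos.1)) _

lemma edgeInvSum_eq_sum_filter_mem [Fintype V] [DecidableEq V] (y : V → ℝ) {e : Sym2 V}
    (he : ¬e.IsDiag) :
    edgeInvSum y e = ∑ v with v ∈ e, (y v)⁻¹ := by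
  induction e using Sym2.ind with
  | _ u w =>
    have hne : u ≠ w := fun h => he (Sym2.mk_isDiag_iff.2 h)
    have hfilter : ({v | v ∈ s(u, w)} : Finset V) = {u, w} := by
      ext v
      simp [Sym2.mem_iff]
    rw [hfilter, sum_pair hne, edgeInvSum_mk]

lemma sum_mul_edgeInvSum_le_card [Fintype V] [DecidableEq V] {x : Sym2 V → ℝ} {y : V → ℝ}
    {E : Finset (Sym2 V)} (hE : ∀ e ∈ E, ¬e.IsDiag) (hy : ∀ v, ∑ e ∈ E with v ∈ e, x e = y v) :
    ∑ e ∈ E, x e * edgeInvSum y e ≤ Fintype.card V := by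
  calc ∑ e ∈ E, x e * edgeInvSum y e = ∑ e ∈ E, ∑ v with v ∈ e, x e * (y v)⁻¹ :=
        sum_congr rfl fun e he => by rw [edgeInvSum_eq_sum_filter_mem y (hE e he), mul_sum]
    _ = ∑ v, (∑ e ∈ E with v ∈ e, x e) * (y v)⁻¹ := by
        simp only [sum_filter, sum_mul, ite_mul, zero_mul]
        exact sum_comm
    _ = ∑ v, y v * (y v)⁻¹ := by simp only [hy]
    _ ≤ ∑ _v : V, (1 : ℝ) := sum_le_sum fun v _ => mul_inv_le_one
    _ = Fintype.card V := by simp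

end EdgeFunctions

lemma sq_add_le_add_mul_add {R : Type*} [CommRing R] [LinearOrder R] [IsStrictOrderedRing R]
    {s m N P ν w : R} (hN : 0 ≤ N) (hP : 0 ≤ P) (hν : 0 ≤ ν) (hw : 0 ≤ w)
    (hs : s ^ 2 ≤ N * P) (hm : m ^ 2 ≤ ν * w) :
    (s + m) ^ 2 ≤ (N + ν) * (P + w) := by
  have hcross : (2 * (s * m)) ^ 2 ≤ (N * w + ν * P) ^ 2 := by
    have : (s * m) ^ 2 ≤ (N * w) * (ν * P) := by
      calc (s * m) ^ 2 = s ^ 2 * m ^ 2 := by ring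
        _ ≤ (N * P) * (ν * w) := mul_le_mul hs hm (sq_nonneg m) (mul_nonneg hN hP)
        _ = (N * w) * (ν * P) := by ring
    nlinarith [sq_nonneg (N * w - ν * P)]
  have := (abs_le_of_sq_le_sq' hcross (by positivity)).2
  nlinarith

section Greedy

variable {V : Type*} [DecidableEq V] {x : Sym2 V → ℝ} {y : V → ℝ}

lemma sq_sum_le_sum_mul_edgeInvSum_mul {K : Finset (Sym2 V)} {a b : V}
    (hy : ∀ v, 0 ≤ y v) (hx : ∀ e ∈ K, 0 ≤ x e) (hdeg : ∀ v, ∑ e ∈ K with v ∈ e, x e ≤ y v)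
    (hab : ∀ e ∈ K, a ∈ e ∨ b ∈ e) (hmax : ∀ e ∈ K, edgeProd y e ≤ y a * y b) :
    (∑ e ∈ K, x e) ^ 2 ≤ (∑ e ∈ K, x e * edgeInvSum y e) * (y a * y b) := by
  have hxy : ∀ e ∈ K, ∀ v ∈ e, x e ≤ y v := fun e he v hv =>
    (single_le_sum (fun e' he' => hx e' (mem_filter.1 he').1) (mem_filter.2 ⟨he, hv⟩)).trans
      (hdeg v)
  rcases (mul_nonneg (hy a) (hy b)).eq_or_lt with hzero | hpos
  · have hx0 : ∀ e ∈ K, x e = 0 := fun e he =>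
      pow_eq_zero_iff two_ne_zero |>.1 <| le_antisymm
        ((sq_le_edgeProd (hx e he) (hxy e he)).trans (hzero ▸ hmax e he)) (sq_nonneg _)
    rw [sum_eq_zero hx0, ← hzero]
    simp
  have ha : 0 < y a := (hy a).lt_of_ne fun h => by simp [← h] at hpos
  have hb : 0 < y b := (hy b).lt_of_ne fun h => by simp [← h] at hpos
  set t := edgeInvSum y s(a, b) with ht_def
  have ht : 0 < t := add_pos (inv_pos.2 ha) (inv_pos.2 hb)
  have ht_mul : t * (y a * y b) = y a + y b := by
    rw [ht_def, edgeInvSum_mk]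
    field_simp
    ring
  have hweight : ∑ e ∈ K, x e ≤ y a + y b := by
    calc ∑ e ∈ K, x e ≤ ∑ e ∈ K with a ∈ e, x e + ∑ e ∈ K with b ∈ e, x e := by
          rw [sum_filter, sum_filter, ← sum_add_distrib]
          refine sum_le_sum fun e he => ?_
          rcases hab e he with h | h <;> split_ifs <;> linarith [hx e he]
      _ ≤ y a + y b := add_le_add (hdeg a) (hdeg b)
  have hcost : (∑ e ∈ K, x e) * t ≤ ∑ e ∈ K, x e * edgeInvSum y e := by
    rw [sum_mul]
    refine sum_le_sum fun e he => ?_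
    rcases (hx e he).eq_or_lt with h0 | hxe
    · simp [← h0]
    have hpos : ∀ v ∈ e, 0 < y v := fun v hv => hxe.trans_le (hxy e he v hv)
    refine mul_le_mul_of_nonneg_left ?_ (hx e he)
    rcases hab e he with hae | hbe
    · exact edgeInvSum_le_of_edgeProd_le hae hpos (hmax e he)
    · rw [ht_def, Sym2.eq_swap]
      exact edgeInvSum_le_of_edgeProd_le hbe hpos ((hmax e he).trans_eq (mul_comm _ _))
  refine le_of_mul_le_mul_right ?_ ht
  calc (∑ e ∈ K, x e) ^ 2 * t = (∑ e ∈ K, x e) * ((∑ e ∈ K, x e) * t) := by ring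
    _ ≤ (y a + y b) * ∑ e ∈ K, x e * edgeInvSum y e :=
        mul_le_mul hweight hcost (mul_nonneg (sum_nonneg hx) ht.le) (by positivity)
    _ = (∑ e ∈ K, x e * edgeInvSum y e) * (y a * y b) * t := by rw [← ht_mul]; ring

theorem exists_matching_sq_sum_le_sum_mul_edgeInvSum_mul (hy : ∀ v, 0 ≤ y v)
    (A : Finset (Sym2 V)) (hx : ∀ e ∈ A, 0 ≤ x e) (hdeg : ∀ v, ∑ e ∈ A with v ∈ e, x e ≤ y v) :
    ∃ M ⊆ A, (M : Set (Sym2 V)).Pairwise (fun e f => ∀ v ∈ e, v ∉ f) ∧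
      (∑ e ∈ A, x e) ^ 2 ≤ (∑ e ∈ A, x e * edgeInvSum y e) * ∑ e ∈ M, edgeProd y e := by
  induction A using Finset.strongInduction with
  | H A ih =>
  rcases A.eq_empty_or_nonempty with rfl | hne
  · exact ⟨∅, empty_subset _, by simp, by simp⟩
  obtain ⟨f, hfA, hfmax⟩ := exists_max_image A (edgeProd y) hne
  obtain ⟨a, ha⟩ : ∃ a, a ∈ f := ⟨f.out.1, Sym2.out_fst_mem f⟩
  obtain ⟨b, rfl⟩ : ∃ b, s(a, b) = f := ⟨_, Sym2.other_spec ha⟩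
  set K := A.filter (fun e => a ∈ e ∨ b ∈ e) with hK
  have hKA : K ⊆ A := filter_subset _ _
  have hfK : s(a, b) ∈ K := mem_filter.2 ⟨hfA, Or.inl ha⟩
  have hdeg_mono : ∀ B ⊆ A, ∀ v, ∑ e ∈ B with v ∈ e, x e ≤ y v := fun B hB v =>
    (sum_le_sum_of_subset_of_nonneg (filter_subset_filter _ hB)
      fun e he _ => hx e (mem_filter.1 he).1).trans (hdeg v)
  obtain ⟨M, hMA, hMdisj, hM⟩ := ih (A \ K) (sdiff_ssubset hKA ⟨_, hfK⟩)
    (fun e he => hx e (mem_sdiff.1 he).1) (hdeg_mono _ sdiff_subset)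
  have hMK : ∀ g ∈ M, a ∉ g ∧ b ∉ g := fun g hg => by
    have := mem_sdiff.1 (hMA hg)
    simpa [hK, this.1] using this.2
  have hstep := sq_sum_le_sum_mul_edgeInvSum_mul hy (fun e he => hx e (hKA he))
    (hdeg_mono K hKA) (fun e he => (mem_filter.1 he).2) (fun e he => hfmax e (hKA he))
  refine ⟨insert s(a, b) M, insert_subset hfA (hMA.trans sdiff_subset), ?_, ?_⟩
  · rw [coe_insert, Set.pairwise_insert]
    refine ⟨hMdisj, fun g hg _ => ⟨?_, fun v hvg hv => ?_⟩⟩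
    · exact Sym2.forall_mem_pair.2 (hMK g hg)
    · rcases Sym2.mem_iff.1 hv with rfl | rfl
      exacts [(hMK g hg).1 hvg, (hMK g hg).2 hvg]
  · have hfM : s(a, b) ∉ M := fun h => (mem_sdiff.1 (hMA h)).2 hfK
    rw [← sum_sdiff hKA, ← sum_sdiff hKA (f := fun e => x e * edgeInvSum y e),
      sum_insert hfM, add_comm (edgeProd y _), edgeProd_mk]
    have hcost_nonneg : ∀ B ⊆ A, 0 ≤ ∑ e ∈ B, x e * edgeInvSum y e := fun B hB =>
      sum_nonneg fun e he => mul_nonneg (hx e (hB he)) (edgeInvSum_nonneg hy e)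
    exact sq_add_le_add_mul_add (hcost_nonneg _ sdiff_subset)
      (sum_nonneg fun e _ => edgeProd_nonneg hy e) (hcost_nonneg K hKA)
      (mul_nonneg (hy a) (hy b)) hM hstep

end Greedy

lemma sum_mul_card_filter {α ι R : Type*} [Fintype α] [CommSemiring R] (p : α → R)
    (M : Finset ι) (P : ι → α → Prop) [∀ i a, Decidable (P i a)] :
    ∑ a, p a * #{i ∈ M | P i a} = ∑ i ∈ M, ∑ a with P i a, p a := by
  simp only [card_filter, Nat.cast_sum, Nat.cast_ite, Nat.cast_one, Nat.cast_zero, mul_sum,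
    mul_ite, mul_one, mul_zero, sum_filter]
  exact sum_comm

theorem stmt_0_general {V : Type} [Fintype V] [DecidableEq V]
    (G : SimpleGraph V) [DecidableRel G.Adj]
    (x : Sym2 V → ℝ) (hx : ∀ e ∈ G.edgeFinset, 0 ≤ x e)
    (p : Finset V → ℝ)
    (hmarg : ∀ v : V,
      ∑ S ∈ (Finset.univ : Finset (Finset V)).filter (fun S => v ∈ S), p S
        = ∑ e ∈ G.edgeFinset.filter (fun e => v ∈ e), x e)
    (hind : ∀ u v : V, G.Adj u v →
      ∑ S ∈ (Finset.univ : Finset (Finset V)).filter (fun S => u ∈ S ∧ v ∈ S), p S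
        = (∑ S ∈ (Finset.univ : Finset (Finset V)).filter (fun S => u ∈ S), p S)
          * (∑ S ∈ (Finset.univ : Finset (Finset V)).filter (fun S => v ∈ S), p S)) :
    ∃ M : Finset (Sym2 V), M ⊆ G.edgeFinset ∧
      (∀ e ∈ M, ∀ f ∈ M, e ≠ f → ∀ v : V, v ∈ e → v ∉ f) ∧
      (∑ e ∈ G.edgeFinset, x e) ^ 2 / (Fintype.card V : ℝ)
        ≤ ∑ S : Finset V, p S * ((M.filter (fun e => ∀ v ∈ e, v ∈ S)).card : ℝ) := by
  set y : V → ℝ := fun v => ∑ S ∈ (univ : Finset (Finset V)) with v ∈ S, p S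
  have hyx : ∀ v, y v = ∑ e ∈ G.edgeFinset with v ∈ e, x e := hmarg
  have hy : ∀ v, 0 ≤ y v := fun v =>
    (hyx v).symm ▸ sum_nonneg fun e he => hx e (mem_filter.1 he).1
  obtain ⟨M, hME, hMdisj, hM⟩ :=
    exists_matching_sq_sum_le_sum_mul_edgeInvSum_mul hy G.edgeFinset hx fun v => (hyx v).ge
  refine ⟨M, hME, hMdisj, ?_⟩
  have hexp : ∑ S : Finset V, p S * ((M.filter (fun e => ∀ v ∈ e, v ∈ S)).card : ℝ)
      = ∑ e ∈ M, edgeProd y e := by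
    rw [sum_mul_card_filter]
    refine sum_congr rfl fun e he => ?_
    induction e using Sym2.ind with
    | _ u w =>
      simp only [Sym2.forall_mem_pair, edgeProd_mk]
      exact hind u w (G.mem_edgeFinset.1 (hME he))
  have hcost : ∑ e ∈ G.edgeFinset, x e * edgeInvSum y e ≤ Fintype.card V :=
    sum_mul_edgeInvSum_le_card (fun e he => G.not_isDiag_of_mem_edgeSet (G.mem_edgeFinset.1 he))
      fun v => (hyx v).symm
  have hW : 0 ≤ ∑ e ∈ M, edgeProd y e := sum_nonneg fun e _ => edgeProd_nonneg hy e
  rw [hexp]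
  exact div_le_of_le_mul₀ (Nat.cast_nonneg _) hW
    (hM.trans ((mul_le_mul_of_nonneg_right hcost hW).trans_eq (mul_comm _ _)))

/-- Given a finite simple graph `G = (V,E)`, a fractional edge weight
`x : E → ℝ≥0` with `x(δ(v)) ≤ 1` for all `v`, and a random subset `A` of `V`
(modeled by a probability mass function `p` on `Finset V`) with
`Pr[v ∈ A] = x(δ(v))` for every vertex and `Pr[u ∈ A ∧ v ∈ A] = Pr[u ∈ A]·Pr[v ∈ A]`
for every edge `{u,v}`, there exists a matching `M ⊆ E` such that the expected number
of edges of `M` with both endpoints in `A` is at least `x(E)² / |V|`. -/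
theorem stmt_0 {V : Type} [Fintype V] [DecidableEq V]
    (G : SimpleGraph V) [DecidableRel G.Adj]
    (x : Sym2 V → ℝ) (hx : ∀ e ∈ G.edgeFinset, 0 ≤ x e)
    (hdeg : ∀ v : V, ∑ e ∈ G.edgeFinset.filter (fun e => v ∈ e), x e ≤ 1)
    (p : Finset V → ℝ) (hp0 : ∀ S : Finset V, 0 ≤ p S)
    (hp1 : ∑ S : Finset V, p S = 1)
    (hmarg : ∀ v : V,
      ∑ S ∈ (Finset.univ : Finset (Finset V)).filter (fun S => v ∈ S), p S
        = ∑ e ∈ G.edgeFinset.filter (fun e => v ∈ e), x e)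
    (hind : ∀ u v : V, G.Adj u v →
      ∑ S ∈ (Finset.univ : Finset (Finset V)).filter (fun S => u ∈ S ∧ v ∈ S), p S
        = (∑ S ∈ (Finset.univ : Finset (Finset V)).filter (fun S => u ∈ S), p S)
          * (∑ S ∈ (Finset.univ : Finset (Finset V)).filter (fun S => v ∈ S), p S)) :
    ∃ M : Finset (Sym2 V), M ⊆ G.edgeFinset ∧
      (∀ e ∈ M, ∀ f ∈ M, e ≠ f → ∀ v : V, v ∈ e → v ∉ f) ∧
      (∑ e ∈ G.edgeFinset, x e) ^ 2 / (Fintype.card V : ℝ)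
        ≤ ∑ S : Finset V, p S * ((M.filter (fun e => ∀ v ∈ e, v ∈ S)).card : ℝ) :=
  stmt_0_general G x hx p hmarg hind
end

section
/- Let G=(V,E) be a finite simple undirected graph and let x : E → ℝ≥0. Then there exists y : E → ℝ≥0 such that ∑_{e ∈ δ(v)} y_e = ∑_{e ∈ δ(v)} x_e for every vertex v ∈ V and the support of y has cardinality at most |V|, i.e., |{ e ∈ E : y_e > 0 }| ≤ |V|. -/
open scoped Classical
open Finset

/-!
The vertex sums of `x` form the vector `∑ₑ xₑ χₑ ∈ ℝ^V`, where `χₑ` is the incidence vector of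
`e`. By the conic Carathéodory theorem this vector is a nonnegative combination of linearly
independent `χₑ`, hence of at most `|V|` of them. Carathéodory's theorem is proved by descent:
while the support is linearly dependent, a relation with a positive coefficient can be subtracted
from the coefficients until one of them vanishes.
-/

section ConicCaratheodory

variable {𝕜 ι M : Type*} [Field 𝕜] [LinearOrder 𝕜] [IsStrictOrderedRing 𝕜]
  [AddCommGroup M] [Module 𝕜 M] {v : ι → M} {s : Finset ι}

lemma exists_pos_of_not_linearIndepOn (h : ¬LinearIndepOn 𝕜 v s) :
    ∃ c : ι → 𝕜, ∑ i ∈ s, c i • v i = 0 ∧ ∃ j ∈ s, 0 < c j := by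
  obtain ⟨c, hc, j, hj, hcj⟩ := not_linearIndepOn_finset_iff.1 h
  rcases hcj.lt_or_gt with hneg | hpos
  · exact ⟨-c, by simp [hc], j, hj, by simpa using hneg⟩
  · exact ⟨c, hc, j, hj, hpos⟩

lemma exists_nonneg_sum_smul_eq_of_not_linearIndepOn {x : ι → 𝕜} (hx : ∀ i ∈ s, 0 ≤ x i)
    (h : ¬LinearIndepOn 𝕜 v s) :
    ∃ i₀ ∈ s, ∃ x' : ι → 𝕜, (∀ i ∈ s, 0 ≤ x' i) ∧ x' i₀ = 0 ∧
      ∑ i ∈ s, x' i • v i = ∑ i ∈ s, x i • v i := by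
  obtain ⟨c, hc, j, hj, hcj⟩ := exists_pos_of_not_linearIndepOn h
  obtain ⟨i₀, hi₀, hmin⟩ := (s.filter (0 < c ·)).exists_min_image (fun i => x i / c i)
    ⟨j, mem_filter.2 ⟨hj, hcj⟩⟩
  obtain ⟨hi₀s, hci₀⟩ := mem_filter.1 hi₀
  -- the largest multiple of `c` that can be subtracted from `x` keeping it nonnegative on `s`
  set τ := x i₀ / c i₀
  have hτ : 0 ≤ τ := div_nonneg (hx i₀ hi₀s) hci₀.le
  refine ⟨i₀, hi₀s, fun i => x i - τ * c i, fun i hi => ?_, ?_, ?_⟩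
  · rcases lt_or_ge 0 (c i) with hci | hci
    · have := (le_div_iff₀ hci).1 (hmin i (mem_filter.2 ⟨hi, hci⟩))
      linarith
    · nlinarith [hx i hi]
  · simp [τ, div_mul_cancel₀ _ hci₀.ne']
  · simp only [sub_smul, sum_sub_distrib, mul_smul, ← smul_sum, hc, smul_zero, sub_zero]

variable [FiniteDimensional 𝕜 M]

theorem exists_nonneg_sum_smul_eq_card_pos_le_finrank (s : Finset ι) (x : ι → 𝕜)
    (hx : ∀ i ∈ s, 0 ≤ x i) :
    ∃ y : ι → 𝕜, (∀ i ∈ s, 0 ≤ y i) ∧ ∑ i ∈ s, y i • v i = ∑ i ∈ s, x i • v i ∧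
      (s.filter (0 < y ·)).card ≤ Module.finrank 𝕜 M := by
  induction s using Finset.strongInduction generalizing x with
  | H s ih =>
  by_cases hli : LinearIndepOn 𝕜 v s
  · refine ⟨x, hx, rfl, (card_filter_le _ _).trans ?_⟩
    simpa using hli.fintype_card_le_finrank
  obtain ⟨i₀, hi₀, x', hx', hx'i₀, hsum⟩ := exists_nonneg_sum_smul_eq_of_not_linearIndepOn hx hli
  obtain ⟨y, hy, hysum, hycard⟩ :=
    ih (s.erase i₀) (erase_ssubset hi₀) x' fun i hi => hx' i (mem_of_mem_erase hi)
  refine ⟨Function.update y i₀ 0, fun i hi => ?_, ?_, ?_⟩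
  · rcases eq_or_ne i i₀ with rfl | hne
    · simp
    · simpa [hne] using hy i (mem_erase.2 ⟨hne, hi⟩)
  · have hupd : ∀ i ∈ s.erase i₀, Function.update y i₀ 0 i = y i := fun i hi =>
      Function.update_of_ne (ne_of_mem_erase hi) _ _
    rw [← hsum, ← sum_erase_add _ _ hi₀, ← sum_erase_add _ _ hi₀, sum_congr rfl
      fun i hi => by rw [hupd i hi], hysum, hx'i₀]
    simp
  · refine (card_le_card fun i hi => ?_).trans hycard
    obtain ⟨his, hpos⟩ := mem_filter.1 hi
    have hne : i ≠ i₀ := by rintro rfl; simp at hpos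
    exact mem_filter.2 ⟨mem_erase.2 ⟨hne, his⟩, by simpa [hne] using hpos⟩

end ConicCaratheodory

/-- For any finite simple graph `G = (V,E)` and any `x : E → ℝ≥0`
there exists `y : E → ℝ≥0` with the same vertex-degree sums,
`y(δ(v)) = x(δ(v))` for every vertex `v`, whose support has size at most `|V|`. -/
theorem stmt_2 {V : Type} [Fintype V] [DecidableEq V]
    (G : SimpleGraph V) [DecidableRel G.Adj]
    (x : Sym2 V → ℝ) (hx : ∀ e ∈ G.edgeFinset, 0 ≤ x e) :
    ∃ y : Sym2 V → ℝ, (∀ e ∈ G.edgeFinset, 0 ≤ y e) ∧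
      (∀ v : V, ∑ e ∈ G.edgeFinset.filter (fun e => v ∈ e), y e
          = ∑ e ∈ G.edgeFinset.filter (fun e => v ∈ e), x e) ∧
      (G.edgeFinset.filter (fun e => 0 < y e)).card ≤ Fintype.card V := by
  obtain ⟨y, hy, hsum, hcard⟩ := exists_nonneg_sum_smul_eq_card_pos_le_finrank
    (v := fun e (w : V) => if w ∈ e then (1 : ℝ) else 0) G.edgeFinset x hx
  refine ⟨y, hy, fun w => ?_, by simpa using hcard⟩
  simpa [Finset.sum_apply, sum_filter] using congrFun hsum w
end

section
/- Let G=(V,E) be a finite simple undirected graph and let y : E → ℝ≥0. Then there exists a matching M ⊆ E of G such that ∑_{{u,v} ∈ M} (∑_{e ∈ δ(u)} y_e) · (∑_{e ∈ δ(v)} y_e) ≥ ∑_{e ∈ E} y_e². -/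
open scoped Classical
open Finset

/-!
Greedy: take an edge `e = s(u, v)` of maximum weight `a`. Every edge `f` meeting `u` or `v` has
`y f ^ 2 ≤ a * y f`, and by inclusion–exclusion (with `e` counted at both ends) these edges have
total weight at most `W u + W v - a`, where `W` is the incident weight. Since `a ≤ W u, W v`,
`a * (W u + W v - a) ≤ W u * W v`, which pays for all edges at `u` or `v`. Delete them, recurse,
and add `e` to the matching found for the rest: restoring the deleted edges only increases
the incident weights.
-/

section IncidentWeight

variable {α : Type*} [DecidableEq α]

def incidentWeight (S : Finset (Sym2 α)) (y : Sym2 α → ℝ) (v : α) : ℝ :=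
  ∑ f ∈ S.filter (fun f => v ∈ f), y f

def incidentWeightProduct (S : Finset (Sym2 α)) (y : Sym2 α → ℝ) : Sym2 α → ℝ :=
  Sym2.lift ⟨fun u v => incidentWeight S y u * incidentWeight S y v, fun _ _ => mul_comm _ _⟩

def IsVertexDisjoint (M : Finset (Sym2 α)) : Prop :=
  ∀ e ∈ M, ∀ f ∈ M, e ≠ f → ∀ v : α, v ∈ e → v ∉ f

variable {S T : Finset (Sym2 α)} {y : Sym2 α → ℝ}

lemma incidentWeight_nonneg (hy : ∀ f ∈ S, 0 ≤ y f) (v : α) : 0 ≤ incidentWeight S y v :=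
  sum_nonneg fun f hf => hy f (mem_filter.mp hf).1

lemma incidentWeight_mono (hTS : T ⊆ S) (hy : ∀ f ∈ S, 0 ≤ y f) (v : α) :
    incidentWeight T y v ≤ incidentWeight S y v :=
  sum_le_sum_of_subset_of_nonneg (filter_subset_filter _ hTS)
    fun f hf _ => hy f (mem_filter.mp hf).1

lemma le_incidentWeight (hy : ∀ f ∈ S, 0 ≤ y f) {e : Sym2 α} (he : e ∈ S) {v : α}
    (hv : v ∈ e) : y e ≤ incidentWeight S y v :=
  single_le_sum (fun f hf => hy f (mem_filter.mp hf).1) (mem_filter.mpr ⟨he, hv⟩)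

lemma incidentWeightProduct_mono (hTS : T ⊆ S) (hy : ∀ f ∈ S, 0 ≤ y f) (e : Sym2 α) :
    incidentWeightProduct T y e ≤ incidentWeightProduct S y e := by
  induction e using Sym2.ind with
  | _ u v =>
    exact mul_le_mul (incidentWeight_mono hTS hy u) (incidentWeight_mono hTS hy v)
      (incidentWeight_nonneg (fun f hf => hy f (hTS hf)) v) (incidentWeight_nonneg hy u)

lemma sum_filter_mem_or_mem_add_le (hy : ∀ f ∈ S, 0 ≤ y f) {u v : α} (he : s(u, v) ∈ S) :
    ∑ f ∈ S.filter (fun f => u ∈ f ∨ v ∈ f), y f + y s(u, v) ≤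
      incidentWeight S y u + incidentWeight S y v := by
  have hboth : y s(u, v) ≤ ∑ f ∈ S.filter (fun f => u ∈ f ∧ v ∈ f), y f :=
    single_le_sum (fun f hf => hy f (mem_filter.mp hf).1)
      (mem_filter.mpr ⟨he, Sym2.mem_mk_left u v, Sym2.mem_mk_right u v⟩)
  rw [incidentWeight, incidentWeight, ← sum_union_inter, filter_or, ← filter_and]
  exact add_le_add_right hboth _

lemma sum_sq_filter_mem_or_mem_le (hy : ∀ f ∈ S, 0 ≤ y f) {u v : α} (he : s(u, v) ∈ S)
    (hmax : ∀ f ∈ S, y f ≤ y s(u, v)) :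
    ∑ f ∈ S.filter (fun f => u ∈ f ∨ v ∈ f), y f ^ 2 ≤
      incidentWeightProduct S y s(u, v) := by
  set a := y s(u, v)
  have hsq : ∑ f ∈ S.filter (fun f => u ∈ f ∨ v ∈ f), y f ^ 2 ≤
      a * ∑ f ∈ S.filter (fun f => u ∈ f ∨ v ∈ f), y f := by
    rw [mul_sum]
    refine sum_le_sum fun f hf => ?_
    have hfS := (mem_filter.mp hf).1
    rw [sq]
    exact mul_le_mul_of_nonneg_right (hmax f hfS) (hy f hfS)
  have hsum := sum_filter_mem_or_mem_add_le hy he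
  have hu := le_incidentWeight hy he (Sym2.mem_mk_left u v)
  have hv := le_incidentWeight hy he (Sym2.mem_mk_right u v)
  have ha : 0 ≤ a := hy _ he
  change _ ≤ incidentWeight S y u * incidentWeight S y v
  nlinarith [mul_le_mul_of_nonneg_left hsum ha, mul_nonneg (sub_nonneg.mpr hu) (sub_nonneg.mpr hv)]

lemma IsVertexDisjoint.insert {M : Finset (Sym2 α)} (hM : IsVertexDisjoint M) {u v : α}
    (hfree : ∀ f ∈ M, ¬(u ∈ f ∨ v ∈ f)) : IsVertexDisjoint (insert s(u, v) M) := by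
  have key : ∀ f ∈ M, ∀ w ∈ s(u, v), w ∉ f := fun f hf w hw hwf =>
    hfree f hf (by rcases Sym2.mem_iff.mp hw with rfl | rfl; exacts [.inl hwf, .inr hwf])
  intro e he f hf hef w hwe
  rcases mem_insert.mp he with rfl | he <;> rcases mem_insert.mp hf with rfl | hf
  · exact absurd rfl hef
  · exact key f hf w hwe
  · exact fun hwf => key e he w hwf hwe
  · exact hM e he f hf hef w hwe

theorem exists_isVertexDisjoint_sum_sq_le (S : Finset (Sym2 α)) (hy : ∀ f ∈ S, 0 ≤ y f) :
    ∃ M ⊆ S, IsVertexDisjoint M ∧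
      ∑ e ∈ S, y e ^ 2 ≤ ∑ e ∈ M, incidentWeightProduct S y e := by
  induction S using Finset.strongInduction with
  | _ S ih =>
  rcases S.eq_empty_or_nonempty with rfl | hne
  · exact ⟨∅, empty_subset _, by simp [IsVertexDisjoint], by simp⟩
  obtain ⟨e, he, hmax⟩ := S.exists_max_image y hne
  induction e using Sym2.ind with
  | _ u v =>
  set R := S.filter (fun f => ¬(u ∈ f ∨ v ∈ f))
  have hRS : R ⊆ S := filter_subset _ _
  have heR : s(u, v) ∉ R := by simp [R]
  obtain ⟨M, hMR, hM, hMsum⟩ :=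
    ih R (ssubset_iff_of_subset hRS |>.mpr ⟨_, he, heR⟩) fun f hf => hy f (hRS hf)
  refine ⟨insert s(u, v) M, insert_subset he (hMR.trans hRS),
    hM.insert fun f hf => (mem_filter.mp (hMR hf)).2, ?_⟩
  rw [sum_insert fun h => heR (hMR h), ← sum_filter_add_sum_filter_not S (fun f => u ∈ f ∨ v ∈ f)]
  exact add_le_add (sum_sq_filter_mem_or_mem_le hy he hmax)
    (hMsum.trans (sum_le_sum fun f _ => incidentWeightProduct_mono hRS hy f))

end IncidentWeight

/-- For any finite simple graph `G = (V,E)` and any `y : E → ℝ≥0`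
there exists a matching `M ⊆ E` such that
`∑_{{u,v} ∈ M} y(δ(u))·y(δ(v)) ≥ ∑_{e ∈ E} y_e²`. -/
theorem stmt_3 {V : Type} [Fintype V] [DecidableEq V]
    (G : SimpleGraph V) [DecidableRel G.Adj]
    (y : Sym2 V → ℝ) (hy : ∀ e ∈ G.edgeFinset, 0 ≤ y e) :
    ∃ M : Finset (Sym2 V), M ⊆ G.edgeFinset ∧
      (∀ e ∈ M, ∀ f ∈ M, e ≠ f → ∀ v : V, v ∈ e → v ∉ f) ∧
      ∑ e ∈ G.edgeFinset, (y e) ^ 2 ≤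
        ∑ e ∈ M,
          Sym2.lift
            ⟨fun u v => (∑ f ∈ G.edgeFinset.filter (fun f => u ∈ f), y f)
                * (∑ f ∈ G.edgeFinset.filter (fun f => v ∈ f), y f),
              fun u v => mul_comm _ _⟩ e :=
  exists_isVertexDisjoint_sum_sq_le G.edgeFinset hy
end

section
/- The maximum of 1 + min{ 1 − a_cross − a_up , a_cross − (a_cc)² / (4 − 2·a_up − 2·a_nc) } over a_up, a_cross, a_cc, a_nc ∈ [0,1] subject to the constraints (i) a_up ≥ a_nc, (ii) a_cross = a_cc + a_nc, and (iii) a_up + a_cross ≤ 1, equals 2(√3 − 1), and it is achieved at a_up = a_nc = 0 and a_cc = a_cross = 4 − 2√3. -/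
/-- The maximum of
`1 + min{1 − a_cross − a_up, a_cross − a_cc²/(4 − 2a_up − 2a_nc)}`
over `a_up, a_cross, a_cc, a_nc ∈ [0,1]` with `a_up ≥ a_nc`, `a_cross = a_cc + a_nc`,
and `a_up + a_cross ≤ 1`, equals `2(√3 − 1)`, attained at
`a_up = a_nc = 0` and `a_cc = a_cross = 4 − 2√3`. -/
theorem stmt_5 :
    IsGreatest
      {v : ℝ | ∃ aup across acc anc : ℝ,
        aup ∈ Set.Icc (0:ℝ) 1 ∧ across ∈ Set.Icc (0:ℝ) 1 ∧
        acc ∈ Set.Icc (0:ℝ) 1 ∧ anc ∈ Set.Icc (0:ℝ) 1 ∧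
        anc ≤ aup ∧ across = acc + anc ∧ aup + across ≤ 1 ∧
        v = 1 + min (1 - across - aup) (across - acc ^ 2 / (4 - 2 * aup - 2 * anc))}
      (2 * (Real.sqrt 3 - 1)) ∧
    1 + min (1 - (4 - 2 * Real.sqrt 3) - 0)
        ((4 - 2 * Real.sqrt 3) - (4 - 2 * Real.sqrt 3) ^ 2 / (4 - 2 * 0 - 2 * 0))
      = 2 * (Real.sqrt 3 - 1) := by
  have hs2 : Real.sqrt 3 ^ 2 = 3 := Real.sq_sqrt (by norm_num)
  set s := Real.sqrt 3 with hsdef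
  have hslb : (1.7 : ℝ) < s := by nlinarith [Real.sqrt_nonneg 3]
  have hsub : s < 1.8 := by nlinarith [Real.sqrt_nonneg 3]
  have hden : (4 - 2 * (0:ℝ) - 2 * 0) = 4 := by norm_num
  have hkey : (4 - 2 * s) - (4 - 2 * s) ^ 2 / (4 - 2 * (0:ℝ) - 2 * 0) = 2 * s - 3 := by
    rw [hden]; nlinarith
  have heq : 1 + min (1 - (4 - 2 * s) - 0)
      ((4 - 2 * s) - (4 - 2 * s) ^ 2 / (4 - 2 * (0:ℝ) - 2 * 0)) = 2 * (s - 1) := by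
    rw [hkey]
    have : (1 : ℝ) - (4 - 2 * s) - 0 = 2 * s - 3 := by ring
    rw [this, min_self]; ring
  refine ⟨⟨⟨0, 4 - 2 * s, 4 - 2 * s, 0, ?_, ?_, ?_, ?_, ?_, ?_, ?_, ?_⟩, ?_⟩, heq⟩
  · constructor <;> nlinarith
  · constructor <;> nlinarith
  · constructor <;> nlinarith
  · norm_num
  · nlinarith
  · ring
  · nlinarith
  · rw [heq]
  · -- upper bound
    rintro v ⟨u, t, c, b, ⟨hu0, hu1⟩, ⟨ht0, ht1⟩, ⟨hc0, hc1⟩, ⟨hb0, hb1⟩, hbu, htc, hut, hv⟩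
    have hm : (2 : ℝ) * (s - 1) = 1 + (2 * s - 3) := by ring
    rw [hv, hm]
    have hgoal : min (1 - t - u) (t - c ^ 2 / (4 - 2 * u - 2 * b)) ≤ 2 * s - 3 := by
      rcases le_or_gt (1 - t - u) (2 * s - 3) with h | h
      · exact min_le_of_left_le h
      · refine min_le_of_right_le ?_
        have hD : (0:ℝ) < 4 - 2 * u - 2 * b := by nlinarith
        rw [sub_le_comm, le_div_iff₀ hD]
        have hc : c = t - b := by linarith
        subst hc
        rcases le_or_gt t (2 * s - 3) with htm | htm
        · nlinarith [mul_nonneg (by linarith : (0:ℝ) ≤ (2 * s - 3) - t) hD.le,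
            sq_nonneg (t - b)]
        -- (t - (2s-3)) * (4 - 2u - 2b) ≤ (t - b)^2
        have f1 : (0:ℝ) ≤ (4 - 2 * s - t - b) * (2 * s - t - b) :=
          mul_nonneg (by linarith) (by linarith)
        have f2 : (0:ℝ) ≤ 2 * (u - b) * (t - (2 * s - 3)) :=
          mul_nonneg (by linarith) (by linarith)
        have f3 : (0:ℝ) ≤ 4 * b * (4 - 2 * s) := mul_nonneg (by linarith) (by linarith)
        have hid : (t - b) ^ 2 - (t - (2 * s - 3)) * (4 - 2 * u - 2 * b) =
            (4 - 2 * s - t - b) * (2 * s - t - b) + 2 * (u - b) * (t - (2 * s - 3))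
              + 4 * b * (4 - 2 * s) := by
          linear_combination 4 * hs2
        linarith
    linarith
end

section
/- Define f₁(x,y) = 1 − x and f₂(x,y) = x − x² · (1 − 2y + 2y²) / (2 − x·y) for (x,y) ∈ [0,1] × [0,1/2]. Then the maximum of min{ f₁(x,y), f₂(x,y) } over (x,y) ∈ [0,1] × [0,1/2] equals √34/4 − 1, and it is attained at x = 2 − √34/4 and y = (8 + √34)/30. -/
/-- With `f₁(x,y) = 1 − x` and `f₂(x,y) = x − x²(1 − 2y + 2y²)/(2 − xy)`
on `[0,1] × [0,1/2]`, the maximum of `min{f₁, f₂}` equals `√34/4 − 1`, attained at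
`x = 2 − √34/4`, `y = (8 + √34)/30`. -/
theorem stmt_6 :
    IsGreatest
      {v : ℝ | ∃ x ∈ Set.Icc (0:ℝ) 1, ∃ y ∈ Set.Icc (0:ℝ) (1/2),
        v = min (1 - x) (x - x ^ 2 * (1 - 2 * y + 2 * y ^ 2) / (2 - x * y))}
      (Real.sqrt 34 / 4 - 1) ∧
    (2 - Real.sqrt 34 / 4) ∈ Set.Icc (0:ℝ) 1 ∧
    (8 + Real.sqrt 34) / 30 ∈ Set.Icc (0:ℝ) (1/2) ∧
    min (1 - (2 - Real.sqrt 34 / 4))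
        ((2 - Real.sqrt 34 / 4) - (2 - Real.sqrt 34 / 4) ^ 2 *
            (1 - 2 * ((8 + Real.sqrt 34) / 30) + 2 * ((8 + Real.sqrt 34) / 30) ^ 2)
          / (2 - (2 - Real.sqrt 34 / 4) * ((8 + Real.sqrt 34) / 30)))
      = Real.sqrt 34 / 4 - 1 := by
  set s := Real.sqrt 34 with hs
  have hs2 : s ^ 2 = 34 := Real.sq_sqrt (by norm_num)
  have hs0 : (0:ℝ) ≤ s := Real.sqrt_nonneg 34
  have hslb : (5.83:ℝ) ≤ s := by nlinarith [hs2, hs0]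
  have hsub : s ≤ (5.84:ℝ) := by nlinarith [hs2, hs0]
  have e1 : 2 - (2 - s / 4) * ((8 + s) / 30) = 7 / 4 := by
    linear_combination (1/120) * hs2
  have e2 : (2 - s / 4) ^ 2 * (1 - 2 * ((8 + s) / 30) + 2 * ((8 + s) / 30) ^ 2)
      = (3 - s / 2) * (7 / 4) := by
    linear_combination ((1 - 2*((8+s)/30) + 2*((8+s)/30)^2)/16 + (49/8 - s)/450 + 7/225) * hs2
  have hf2 : (2 - s / 4) - (2 - s / 4) ^ 2 *
      (1 - 2 * ((8 + s) / 30) + 2 * ((8 + s) / 30) ^ 2)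
      / (2 - (2 - s / 4) * ((8 + s) / 30)) = s / 4 - 1 := by
    rw [e1, e2]
    ring
  have hmin : min (1 - (2 - s / 4))
      ((2 - s / 4) - (2 - s / 4) ^ 2 *
          (1 - 2 * ((8 + s) / 30) + 2 * ((8 + s) / 30) ^ 2)
        / (2 - (2 - s / 4) * ((8 + s) / 30))) = s / 4 - 1 := by
    rw [hf2, show 1 - (2 - s / 4) = s / 4 - 1 by ring, min_self]
  have hxmem : (2 - s / 4) ∈ Set.Icc (0:ℝ) 1 := ⟨by linarith, by linarith⟩
  have hymem : (8 + s) / 30 ∈ Set.Icc (0:ℝ) (1/2) := ⟨by linarith, by linarith⟩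
  refine ⟨⟨⟨2 - s / 4, hxmem, (8 + s) / 30, hymem, hmin.symm⟩, ?_⟩, hxmem, hymem, hmin⟩
  rintro v ⟨x, ⟨hx0, hx1⟩, y, ⟨hy0, hy1⟩, rfl⟩
  rcases le_or_gt (2 - s / 4) x with hx | hx
  · exact le_trans (min_le_left _ _) (by linarith)
  · refine le_trans (min_le_right _ _) ?_
    have hD : (0:ℝ) < 2 - x * y := by
      nlinarith [mul_nonneg hx0 hy0, mul_nonneg (sub_nonneg.2 hx1) hy0]
    have hfac : (0:ℝ) ≤ (2 - s/4 - x) * (2 + (s/4 - 1)/4 - (7/8) * (x + (2 - s/4))) := by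
      apply mul_nonneg (by linarith)
      nlinarith [hx.le]
    have key : x * (2 - x * y) - x ^ 2 * (1 - 2 * y + 2 * y ^ 2)
        ≤ (s / 4 - 1) * (2 - x * y) := by
      nlinarith [hfac, sq_nonneg (x * y - (x + (s/4 - 1))/4), hs2]
    have hrw : x - x ^ 2 * (1 - 2 * y + 2 * y ^ 2) / (2 - x * y)
        = (x * (2 - x * y) - x ^ 2 * (1 - 2 * y + 2 * y ^ 2)) / (2 - x * y) := by
      field_simp
    rw [hrw, div_le_iff₀ hD]
    exact key
end

section
/- For every real β ≥ 1, the maximum over a ∈ [0,1] of 1 + min{ 1 − a , a·(1 − a/(48β²)) } equals 2 − 4β·(12β − √(144β² − 3)). -/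
/-- For every real `β ≥ 1`, the maximum over `a ∈ [0,1]` of
`1 + min{1 − a, a(1 − a/(48β²))}` equals `2 − 4β(12β − √(144β² − 3))`. -/
theorem stmt_8 (β : ℝ) (hβ : 1 ≤ β) :
    IsGreatest
      {v : ℝ | ∃ a ∈ Set.Icc (0:ℝ) 1, v = 1 + min (1 - a) (a * (1 - a / (48 * β ^ 2)))}
      (2 - 4 * β * (12 * β - Real.sqrt (144 * β ^ 2 - 3))) := by
  have hβ0 : (0:ℝ) < β := lt_of_lt_of_le one_pos hβ
  set s := Real.sqrt (144 * β ^ 2 - 3) with hs_def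
  have hs0 : 0 ≤ s := Real.sqrt_nonneg _
  have hs2 : s ^ 2 = 144 * β ^ 2 - 3 := by
    rw [hs_def, Real.sq_sqrt]; nlinarith
  set a' : ℝ := 48 * β ^ 2 - 4 * β * s with ha'_def
  have hc : (0:ℝ) < 48 * β ^ 2 := by positivity
  have ha'0 : 0 ≤ a' := by nlinarith
  have ha'1 : a' ≤ 1 := by nlinarith [sq_nonneg (4 * β * s - (48 * β ^ 2 - 1))]
  have heq : 1 - a' = a' * (1 - a' / (48 * β ^ 2)) := by
    have : a' * (1 - a' / (48 * β ^ 2)) = (a' * (48 * β ^ 2) - a' ^ 2) / (48 * β ^ 2) := by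
      field_simp
    rw [this]
    rw [eq_div_iff (ne_of_gt hc)]
    nlinarith
  constructor
  · exact ⟨a', ⟨ha'0, ha'1⟩, by rw [← heq, min_self]; ring⟩
  · rintro v ⟨a, ⟨ha0, ha1⟩, rfl⟩
    have hgoal : 2 - 4 * β * (12 * β - s) = 2 - a' := by ring
    rw [hgoal]
    rcases le_total a a' with h | h
    · have h2 : a * (1 - a / (48 * β ^ 2)) ≤ a' * (1 - a' / (48 * β ^ 2)) := by
        have hd : a' * (1 - a' / (48 * β ^ 2)) - a * (1 - a / (48 * β ^ 2))
            = (a' - a) * (48 * β ^ 2 - a - a') / (48 * β ^ 2) := by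
          field_simp; ring
        nlinarith [div_nonneg (mul_nonneg (by linarith : (0:ℝ) ≤ a' - a) (by nlinarith : (0:ℝ) ≤ 48 * β ^ 2 - a - a')) hc.le]
      calc 1 + min (1 - a) (a * (1 - a / (48 * β ^ 2)))
          ≤ 1 + a * (1 - a / (48 * β ^ 2)) := by gcongr; exact min_le_right _ _
        _ ≤ 1 + a' * (1 - a' / (48 * β ^ 2)) := by linarith
        _ = 2 - a' := by rw [← heq]; ring
    · calc 1 + min (1 - a) (a * (1 - a / (48 * β ^ 2)))
          ≤ 1 + (1 - a) := by gcongr; exact min_le_left _ _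
        _ ≤ 2 - a' := by linarith
end

section
/- Let (T,L) be a shadow-complete TAP instance on a finite tree T=(V,E) with links L, and let L₁ ⊆ L. Then there exists a shadow-minimal set of links L₂ ⊆ L such that |L₂| ≤ |L₁|, the set L₂ covers exactly the same edges of T as L₁ (i.e., ∪_{ℓ∈L₂} P_ℓ = ∪_{ℓ∈L₁} P_ℓ), and every link of L₂ is either a link of L₁ or a shadow of a link of L₁. -/
/-- `a` lies on the unique path in the tree `G` between the endpoints of the link `ℓ`
(characterized via distances, which determine the unique path of a tree). -/
def MemLinkPath {V : Type} (G : SimpleGraph V) (ℓ : Sym2 V) (a : V) : Prop :=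
  ∃ u v : V, ℓ = s(u, v) ∧ G.dist u a + G.dist a v = G.dist u v

/-- The edge set `P_ℓ` of the unique path in the tree `G` between the endpoints of `ℓ`:
the edges of `G` both of whose endpoints lie on that path. -/
def linkPath {V : Type} (G : SimpleGraph V) (ℓ : Sym2 V) : Set (Sym2 V) :=
  {e | e ∈ G.edgeSet ∧ ∀ a ∈ e, MemLinkPath G ℓ a}

/-- `s` is a shadow of the link `ℓ`: both endpoints of `s` lie on the path `P_ℓ`. -/
def IsShadow {V : Type} (G : SimpleGraph V) (s ℓ : Sym2 V) : Prop :=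
  ∀ a ∈ s, MemLinkPath G ℓ a

/-- The links `ℓ₁` and `ℓ₂` are shadow-minimal: there is no (proper) shadow `s` of one of
them, say of `ℓ₁`, with `P_{ℓ₁} ∪ P_{ℓ₂} = P_s ∪ P_{ℓ₂}`. -/
def ShadowMinimalPair {V : Type} (G : SimpleGraph V) (ℓ₁ ℓ₂ : Sym2 V) : Prop :=
  ¬ ∃ s : Sym2 V, s ≠ ℓ₁ ∧ IsShadow G s ℓ₁ ∧
      linkPath G s ∪ linkPath G ℓ₂ = linkPath G ℓ₁ ∪ linkPath G ℓ₂

/-- A set of links is shadow-minimal if its links are pairwise shadow-minimal. -/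
def ShadowMinimalSet {V : Type} (G : SimpleGraph V) (L' : Finset (Sym2 V)) : Prop :=
  ∀ ℓ₁ ∈ L', ∀ ℓ₂ ∈ L', ℓ₁ ≠ ℓ₂ → ShadowMinimalPair G ℓ₁ ℓ₂


section Aux

open SimpleGraph

variable {V : Type} {G : SimpleGraph V}

/-- In a tree, every path is a geodesic. -/
lemma tree_path_length (hT : G.IsTree) {u v : V} {p : G.Walk u v} (hp : p.IsPath) :
    p.length = G.dist u v := by
  classical
  obtain ⟨w, hw⟩ := hT.isConnected.exists_walk_length_eq_dist u v
  have hb : w.bypass.IsPath := w.bypass_isPath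
  have h1 : w.bypass.length ≤ G.dist u v := hw ▸ w.length_bypass_le
  have h2 : G.dist u v ≤ w.bypass.length := SimpleGraph.dist_le _
  have h3 : (⟨p, hp⟩ : G.Path u v) = ⟨w.bypass, hb⟩ := hT.IsAcyclic.path_unique _ _
  have h4 : p.length = w.bypass.length := congrArg SimpleGraph.Walk.length (congrArg Subtype.val h3)
  omega

lemma mem_support_btw (hT : G.IsTree) {u v a : V} {p : G.Walk u v} (hp : p.IsPath)
    (ha : a ∈ p.support) : G.dist u a + G.dist a v = G.dist u v := by
  classical
  have hsp := SimpleGraph.Walk.take_spec p ha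
  have hlen : (p.takeUntil a ha).length + (p.dropUntil a ha).length = p.length := by
    rw [← SimpleGraph.Walk.length_append, hsp]
  rw [tree_path_length hT (hp.takeUntil ha), tree_path_length hT (hp.dropUntil ha),
    tree_path_length hT hp] at hlen
  exact hlen

lemma btw_mem_support (hT : G.IsTree) {u v a : V} {p : G.Walk u v} (hp : p.IsPath)
    (h : G.dist u a + G.dist a v = G.dist u v) : a ∈ p.support := by
  classical
  obtain ⟨q, hq⟩ := hT.isConnected.exists_walk_length_eq_dist u a
  obtain ⟨r, hr⟩ := hT.isConnected.exists_walk_length_eq_dist a v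
  set q' := q.bypass with hq'def
  set r' := r.bypass with hr'def
  have hq'p : q'.IsPath := q.bypass_isPath
  have hr'p : r'.IsPath := r.bypass_isPath
  have key : ∀ x, x ∈ q'.support → x ∈ r'.support → x = a := by
    intro x hxq hxr
    have h1 := mem_support_btw hT hq'p hxq
    have h2 := mem_support_btw hT hr'p hxr
    have h3 : G.dist u v ≤ G.dist u x + G.dist x v := hT.isConnected.dist_triangle
    have h4 : G.dist x a = G.dist a x := SimpleGraph.dist_comm
    have h5 : G.dist x a = 0 := by omega
    exact ((hT.isConnected.dist_eq_zero_iff).mp h5)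
  have happ : (q'.append r').IsPath := by
    rw [SimpleGraph.Walk.isPath_def, SimpleGraph.Walk.support_append]
    refine List.Nodup.append hq'p.support_nodup ?_ ?_
    · exact hr'p.support_nodup.tail
    · intro x hx hx'
      have hxr : x ∈ r'.support := List.mem_of_mem_tail hx'
      have hxa : x = a := key x hx hxr
      subst hxa
      have := hr'p.support_nodup
      rw [r'.support_eq_cons] at this
      exact (List.nodup_cons.mp this).1 hx'
  have h6 : (⟨p, hp⟩ : G.Path u v) = ⟨q'.append r', happ⟩ := hT.IsAcyclic.path_unique _ _
  have h7 : p = q'.append r' := congrArg Subtype.val h6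
  rw [h7, SimpleGraph.Walk.mem_support_append_iff]
  exact Or.inl (q'.end_mem_support)

/-- Three-point decomposition along a tree path. -/
lemma three_point (hT : G.IsTree) {u v a b : V} {p : G.Walk u v} (hp : p.IsPath)
    (ha : a ∈ p.support) (hb : b ∈ p.support) :
    G.dist u a + G.dist a b + G.dist b v = G.dist u v ∨
    G.dist u b + G.dist b a + G.dist a v = G.dist u v := by
  classical
  by_cases h : b ∈ (p.takeUntil a ha).support
  · right
    set t := p.takeUntil a ha with ht
    have htp : t.IsPath := hp.takeUntil ha
    have hlen1 : (t.takeUntil b h).length + (t.dropUntil b h).length = t.length := by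
      rw [← SimpleGraph.Walk.length_append, SimpleGraph.Walk.take_spec t h]
    have hlen2 : t.length + (p.dropUntil a ha).length = p.length := by
      rw [← SimpleGraph.Walk.length_append, SimpleGraph.Walk.take_spec p ha]
    rw [tree_path_length hT (htp.takeUntil h), tree_path_length hT (htp.dropUntil h),
      tree_path_length hT htp] at hlen1
    rw [tree_path_length hT htp, tree_path_length hT (hp.dropUntil ha),
      tree_path_length hT hp] at hlen2
    omega
  · left
    have hb' : b ∈ (p.dropUntil a ha).support := by
      rw [← SimpleGraph.Walk.take_spec p ha, SimpleGraph.Walk.mem_support_append_iff] at hb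
      tauto
    set d := p.dropUntil a ha with hd
    have hdp : d.IsPath := hp.dropUntil ha
    have hlen1 : (d.takeUntil b hb').length + (d.dropUntil b hb').length = d.length := by
      rw [← SimpleGraph.Walk.length_append, SimpleGraph.Walk.take_spec d hb']
    have hlen2 : (p.takeUntil a ha).length + d.length = p.length := by
      rw [← SimpleGraph.Walk.length_append, SimpleGraph.Walk.take_spec p ha]
    rw [tree_path_length hT (hdp.takeUntil hb'), tree_path_length hT (hdp.dropUntil hb'),
      tree_path_length hT hdp] at hlen1
    rw [tree_path_length hT (hp.takeUntil ha), tree_path_length hT hdp,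
      tree_path_length hT hp] at hlen2
    omega

lemma btw_trans (hT : G.IsTree) {u v a b x : V}
    (ha : G.dist u a + G.dist a v = G.dist u v)
    (hb : G.dist u b + G.dist b v = G.dist u v)
    (hx : G.dist a x + G.dist x b = G.dist a b) :
    G.dist u x + G.dist x v = G.dist u v := by
  classical
  obtain ⟨w, hw⟩ := hT.isConnected.exists_walk_length_eq_dist u v
  have hbp : w.bypass.IsPath := w.bypass_isPath
  have hma : a ∈ w.bypass.support := btw_mem_support hT hbp ha
  have hmb : b ∈ w.bypass.support := btw_mem_support hT hbp hb
  have h3 : G.dist u v ≤ G.dist u x + G.dist x v := hT.isConnected.dist_triangle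
  have t1 : G.dist u x ≤ G.dist u a + G.dist a x := hT.isConnected.dist_triangle
  have t2 : G.dist x v ≤ G.dist x b + G.dist b v := hT.isConnected.dist_triangle
  have t1' : G.dist u x ≤ G.dist u b + G.dist b x := hT.isConnected.dist_triangle
  have t2' : G.dist x v ≤ G.dist x a + G.dist a v := hT.isConnected.dist_triangle
  have c1 : G.dist a x = G.dist x a := SimpleGraph.dist_comm
  have c2 : G.dist b x = G.dist x b := SimpleGraph.dist_comm
  have c3 : G.dist a b = G.dist b a := SimpleGraph.dist_comm
  rcases three_point hT hbp hma hmb with h | h <;> omega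

lemma btw_strict (hT : G.IsTree) {u v a b : V} (hne : s(a, b) ≠ s(u, v))
    (ha : G.dist u a + G.dist a v = G.dist u v)
    (hb : G.dist u b + G.dist b v = G.dist u v) :
    G.dist a b < G.dist u v := by
  classical
  obtain ⟨w, hw⟩ := hT.isConnected.exists_walk_length_eq_dist u v
  have hbp : w.bypass.IsPath := w.bypass_isPath
  have hma : a ∈ w.bypass.support := btw_mem_support hT hbp ha
  have hmb : b ∈ w.bypass.support := btw_mem_support hT hbp hb
  have c3 : G.dist a b = G.dist b a := SimpleGraph.dist_comm
  rcases three_point hT hbp hma hmb with h | h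
  · rcases Nat.lt_or_ge (G.dist a b) (G.dist u v) with h' | h'
    · exact h'
    · exfalso
      have hua : G.dist u a = 0 := by omega
      have hbv : G.dist b v = 0 := by omega
      have h1 : u = a := (hT.isConnected.dist_eq_zero_iff).mp hua
      have h2 : b = v := (hT.isConnected.dist_eq_zero_iff).mp hbv
      exact hne (by rw [← h1, h2])
  · rcases Nat.lt_or_ge (G.dist a b) (G.dist u v) with h' | h'
    · exact h'
    · exfalso
      have hub : G.dist u b = 0 := by omega
      have hav : G.dist a v = 0 := by omega
      have h1 : u = b := (hT.isConnected.dist_eq_zero_iff).mp hub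
      have h2 : a = v := (hT.isConnected.dist_eq_zero_iff).mp hav
      exact hne (by rw [← h1, h2, Sym2.eq_swap])




lemma memLinkPath_iff {u v a : V} :
    MemLinkPath G s(u, v) a ↔ G.dist u a + G.dist a v = G.dist u v := by
  constructor
  · rintro ⟨u', v', heq, h⟩
    rcases Sym2.eq_iff.mp heq with ⟨rfl, rfl⟩ | ⟨rfl, rfl⟩
    · exact h
    · have c1 : G.dist u a = G.dist a u := SimpleGraph.dist_comm
      have c2 : G.dist a v = G.dist v a := SimpleGraph.dist_comm
      have c3 : G.dist u v = G.dist v u := SimpleGraph.dist_comm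
      omega
  · exact fun h => ⟨u, v, rfl, h⟩

lemma shadow_trans' (hT : G.IsTree) {s t ℓ : Sym2 V}
    (h1 : IsShadow G s t) (h2 : IsShadow G t ℓ) : IsShadow G s ℓ := by
  induction ℓ using Sym2.ind with | _ u v =>
  induction t using Sym2.ind with | _ a b =>
  intro x hx
  have ha : MemLinkPath G s(u, v) a := h2 a (Sym2.mem_mk_left a b)
  have hb : MemLinkPath G s(u, v) b := h2 b (Sym2.mem_mk_right a b)
  have hx' : MemLinkPath G s(a, b) x := h1 x hx
  rw [memLinkPath_iff] at ha hb hx' ⊢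
  exact btw_trans hT ha hb hx'

/-- length of a link -/
noncomputable def linkLen (G : SimpleGraph V) : Sym2 V → ℕ :=
  Sym2.lift ⟨fun u v => G.dist u v, fun u v => SimpleGraph.dist_comm⟩

@[simp] lemma linkLen_mk (u v : V) : linkLen G s(u, v) = G.dist u v := rfl

lemma shadow_len_lt (hT : G.IsTree) {s ℓ : Sym2 V} (hsh : IsShadow G s ℓ)
    (hne : s ≠ ℓ) : linkLen G s < linkLen G ℓ := by
  induction ℓ using Sym2.ind with | _ u v =>
  induction s using Sym2.ind with | _ a b =>
  have ha := memLinkPath_iff.mp (hsh a (Sym2.mem_mk_left a b))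
  have hb := memLinkPath_iff.mp (hsh b (Sym2.mem_mk_right a b))
  simpa using btw_strict hT hne ha hb

lemma linkPath_diag_empty (hT : G.IsTree) {s : Sym2 V} (hd : s.IsDiag) :
    linkPath G s = ∅ := by
  induction s using Sym2.ind with | _ c c' =>
  have hcc : c' = c := (Sym2.mk_isDiag_iff.mp hd).symm
  subst hcc
  ext e
  simp only [Set.mem_empty_iff_false, iff_false]
  rintro ⟨he, hmem⟩
  induction e using Sym2.ind with | _ x y =>
  have hxy : x ≠ y := (G.mem_edgeSet.mp he).ne
  have hx := memLinkPath_iff.mp (hmem x (Sym2.mem_mk_left x y))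
  have hy := memLinkPath_iff.mp (hmem y (Sym2.mem_mk_right x y))
  have hself : G.dist c' c' = 0 := SimpleGraph.dist_self
  have hcx : G.dist c' x = 0 := by
    have : G.dist c' x = G.dist x c' := SimpleGraph.dist_comm
    omega
  have hcy : G.dist c' y = 0 := by
    have : G.dist c' y = G.dist y c' := SimpleGraph.dist_comm
    omega
  exact hxy ((hT.isConnected.dist_eq_zero_iff.mp hcx).symm.trans
    (hT.isConnected.dist_eq_zero_iff.mp hcy))




end Aux

/-- In a shadow-complete TAP instance `(T, L)`, for every `L₁ ⊆ L` there is
a shadow-minimal `L₂ ⊆ L` with `|L₂| ≤ |L₁|` covering exactly the same edges, all of whose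
links are links of `L₁` or shadows of links of `L₁`. -/
theorem stmt_10 {V : Type} (G : SimpleGraph V) (hT : G.IsTree)
    (L : Finset (Sym2 V)) (hLlinks : ∀ ℓ ∈ L, ¬ ℓ.IsDiag)
    (hComplete : ∀ ℓ ∈ L, ∀ s : Sym2 V, ¬ s.IsDiag → IsShadow G s ℓ → s ∈ L)
    (L₁ : Finset (Sym2 V)) (hL₁ : L₁ ⊆ L) :
    ∃ L₂ : Finset (Sym2 V), L₂ ⊆ L ∧ ShadowMinimalSet G L₂ ∧ L₂.card ≤ L₁.card ∧
      (⋃ ℓ ∈ (L₂ : Set (Sym2 V)), linkPath G ℓ)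
        = (⋃ ℓ ∈ (L₁ : Set (Sym2 V)), linkPath G ℓ) ∧
      ∀ ℓ ∈ L₂, ℓ ∈ L₁ ∨ ∃ ℓ' ∈ L₁, IsShadow G ℓ ℓ' := by
  classical
  suffices H : ∀ n : ℕ, ∀ L₂ : Finset (Sym2 V), (∑ ℓ ∈ L₂, (linkLen G ℓ + 1)) ≤ n →
      L₂ ⊆ L → L₂.card ≤ L₁.card →
      (⋃ ℓ ∈ (L₂ : Set (Sym2 V)), linkPath G ℓ)
        = (⋃ ℓ ∈ (L₁ : Set (Sym2 V)), linkPath G ℓ) →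
      (∀ ℓ ∈ L₂, ℓ ∈ L₁ ∨ ∃ ℓ' ∈ L₁, IsShadow G ℓ ℓ') →
      ∃ L₂' : Finset (Sym2 V), L₂' ⊆ L ∧ ShadowMinimalSet G L₂' ∧ L₂'.card ≤ L₁.card ∧
        (⋃ ℓ ∈ (L₂' : Set (Sym2 V)), linkPath G ℓ)
          = (⋃ ℓ ∈ (L₁ : Set (Sym2 V)), linkPath G ℓ) ∧
        ∀ ℓ ∈ L₂', ℓ ∈ L₁ ∨ ∃ ℓ' ∈ L₁, IsShadow G ℓ ℓ' by
    exact H _ L₁ le_rfl hL₁ le_rfl rfl (fun ℓ h => Or.inl h)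
  intro n
  induction n with
  | zero =>
    intro L₂ hμ h1 h2 h3 h4
    have hzero : ∀ ℓ ∈ L₂, linkLen G ℓ + 1 = 0 :=
      Finset.sum_eq_zero_iff.mp (Nat.le_zero.mp hμ)
    have hempty : L₂ = ∅ := by
      apply Finset.eq_empty_iff_forall_notMem.mpr
      intro x hx
      exact Nat.succ_ne_zero _ (hzero x hx)
    refine ⟨L₂, h1, ?_, h2, h3, h4⟩
    intro a ha
    rw [hempty] at ha
    simp at ha
  | succ n IH =>
    intro L₂ hμ h1 h2 h3 h4
    by_cases hmin : ShadowMinimalSet G L₂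
    · exact ⟨L₂, h1, hmin, h2, h3, h4⟩
    rw [ShadowMinimalSet] at hmin
    push_neg at hmin
    obtain ⟨ℓ₁, hℓ₁, ℓ₂, hℓ₂, hne, hpair⟩ := hmin
    rw [ShadowMinimalPair, not_not] at hpair
    obtain ⟨s, hsne, hsh, heqU⟩ := hpair
    have hℓ₂e : ℓ₂ ∈ L₂.erase ℓ₁ := Finset.mem_erase.mpr ⟨hne.symm, hℓ₂⟩
    have hkey : (∑ ℓ ∈ L₂.erase ℓ₁, (linkLen G ℓ + 1)) + (linkLen G ℓ₁ + 1)
        = ∑ ℓ ∈ L₂, (linkLen G ℓ + 1) := Finset.sum_erase_add _ _ hℓ₁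
    have habs : linkPath G ℓ₂ ∪ (⋃ ℓ ∈ ((L₂.erase ℓ₁ : Finset (Sym2 V)) : Set (Sym2 V)), linkPath G ℓ)
        = ⋃ ℓ ∈ ((L₂.erase ℓ₁ : Finset (Sym2 V)) : Set (Sym2 V)), linkPath G ℓ :=
      Set.union_eq_self_of_subset_left (Set.subset_biUnion_of_mem (by exact_mod_cast hℓ₂e))
    have hL₂split : (⋃ ℓ ∈ (L₂ : Set (Sym2 V)), linkPath G ℓ)
        = linkPath G ℓ₁ ∪ ⋃ ℓ ∈ ((L₂.erase ℓ₁ : Finset (Sym2 V)) : Set (Sym2 V)), linkPath G ℓ := by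
      conv_lhs => rw [← Finset.insert_erase hℓ₁]
      rw [Finset.coe_insert, Set.biUnion_insert]
    by_cases hd : s.IsDiag
    · -- drop ℓ₁
      have hempty : linkPath G s = ∅ := linkPath_diag_empty hT hd
      rw [hempty, Set.empty_union] at heqU
      refine IH (L₂.erase ℓ₁) ?_ ?_ ?_ ?_ ?_
      · omega
      · exact (Finset.erase_subset _ _).trans h1
      · exact (Finset.card_le_card (Finset.erase_subset _ _)).trans h2
      · rw [← h3, hL₂split]
        rw [← habs, ← Set.union_assoc, ← heqU]
      · exact fun ℓ h => h4 ℓ (Finset.erase_subset _ _ h)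
    · -- replace ℓ₁ by s
      have hsL : s ∈ L := hComplete ℓ₁ (h1 hℓ₁) s hd hsh
      have hlt : linkLen G s < linkLen G ℓ₁ := shadow_len_lt hT hsh hsne
      refine IH (insert s (L₂.erase ℓ₁)) ?_ ?_ ?_ ?_ ?_
      · have hins : (∑ ℓ ∈ insert s (L₂.erase ℓ₁), (linkLen G ℓ + 1))
            ≤ (∑ ℓ ∈ L₂.erase ℓ₁, (linkLen G ℓ + 1)) + (linkLen G s + 1) := by
          by_cases hmem : s ∈ L₂.erase ℓ₁
          · rw [Finset.insert_eq_self.mpr hmem]; omega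
          · rw [Finset.sum_insert hmem]; omega
        omega
      · exact Finset.insert_subset hsL ((Finset.erase_subset _ _).trans h1)
      · have hc1 : (insert s (L₂.erase ℓ₁)).card ≤ (L₂.erase ℓ₁).card + 1 :=
          Finset.card_insert_le _ _
        have hc2 : (L₂.erase ℓ₁).card = L₂.card - 1 := Finset.card_erase_of_mem hℓ₁
        have hc3 : 1 ≤ L₂.card := Finset.card_pos.mpr ⟨ℓ₁, hℓ₁⟩
        omega
      · rw [← h3, hL₂split]
        rw [Finset.coe_insert, Set.biUnion_insert]
        rw [← habs, ← Set.union_assoc, heqU, Set.union_assoc]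
      · intro ℓ hmem
        rcases Finset.mem_insert.mp hmem with rfl | hmem'
        · rcases h4 ℓ₁ hℓ₁ with h | ⟨ℓ', hℓ', hsh'⟩
          · exact Or.inr ⟨ℓ₁, h, hsh⟩
          · exact Or.inr ⟨ℓ', hℓ', shadow_trans' hT hsh hsh'⟩
        · exact h4 ℓ (Finset.erase_subset _ _ hmem')
end

section
/- Let (T,L) be a TAP instance where T is a k-wide tree with root r, and let L' ⊆ L be a shadow-minimal set of links. Then for every principal subtree T_i of T, the number of cross-links in L' that have an endpoint inside T_i (i.e., an endpoint in T_i different from r) is at most k. -/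
open scoped Classical

/-- `v` belongs to the principal subtree of the tree `G` rooted at `r` associated with the
child `c` of `r` (i.e. `v = r`, or `c` lies on the path from `r` to `v`). -/
def MemPrincipal {V : Type} (G : SimpleGraph V) (r c v : V) : Prop :=
  v = r ∨ G.dist r c + G.dist c v = G.dist r v

/-- Vertex set of the principal subtree of child `c`. -/
noncomputable def principalVerts {V : Type} [Fintype V] (G : SimpleGraph V) (r c : V) :
    Finset V :=
  Finset.univ.filter (fun v => MemPrincipal G r c v)

/-- The leaves (degree-1 vertices) of the principal subtree of child `c`. -/
noncomputable def principalLeaves {V : Type} [Fintype V] (G : SimpleGraph V) (r c : V) :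
    Finset V :=
  (principalVerts G r c).filter
    (fun v => ((principalVerts G r c).filter (fun w => G.Adj v w)).card = 1)

/-- The tree `G` is `k`-wide with root `r`: every principal subtree has at most `k`
leaves. -/
def KWide {V : Type} [Fintype V] (G : SimpleGraph V) (r : V) (k : ℕ) : Prop :=
  ∀ c : V, G.Adj r c → (principalLeaves G r c).card ≤ k

/-- `u` and `v` lie in a common principal subtree of the tree `G` rooted at `r`. -/
def SameSubtree {V : Type} (G : SimpleGraph V) (r u v : V) : Prop :=
  ∃ c : V, G.Adj r c ∧ MemPrincipal G r c u ∧ MemPrincipal G r c v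

/-- `ℓ` is a cross-link with respect to the root `r`: both endpoints differ from `r` and
lie in different principal subtrees. -/
def IsCrossLink {V : Type} (G : SimpleGraph V) (r : V) (ℓ : Sym2 V) : Prop :=
  ∃ u v : V, ℓ = s(u, v) ∧ u ≠ r ∧ v ≠ r ∧ ¬ SameSubtree G r u v

/-!
Every cross-link passes through `r`. Charge each counted cross-link to a leaf `w` of the
principal subtree `T_c` such that its endpoint `u` in `T_c` lies on the path from `r` to `w`; as
`T_c` has at most `k` leaves, it suffices that no leaf is charged twice. If `s(u₁, x₁)` and
`s(u₂, x₂)` are charged to the same `w`, then `u₁` and `u₂` both lie on the path from `r` to `w`,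
say `u₁` nearer to `r`. Then `P_{u₁ r} ⊆ P_{u₂ r} ⊆ P_{u₂ x₂}`, so the shadow `s(r, x₁)` of the
first link covers, together with the second link, everything the two links cover, contradicting
shadow-minimality.
-/

namespace SimpleGraph

variable {V : Type} {G : SimpleGraph V} {a b c r u v w x y z : V}

/-- In a tree: `x` lies on the path from `a` to `b`. -/
def Between (G : SimpleGraph V) (a x b : V) : Prop :=
  G.dist a x + G.dist x b = G.dist a b

@[simp] lemma between_self_right (a b : V) : G.Between a b b := by simp [Between]

lemma Between.symm (h : G.Between a x b) : G.Between b x a := by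
  unfold Between at *
  rw [dist_comm (u := b) (v := x), dist_comm (u := x) (v := a), dist_comm (u := b) (v := a)]
  omega

lemma Connected.between_trans (hG : G.Connected) (hx : G.Between a x y) (hy : G.Between a y b) :
    G.Between a x b ∧ G.Between x y b := by
  unfold Between at *
  have := hG.dist_triangle (u := a) (v := x) (w := b)
  have := hG.dist_triangle (u := x) (v := y) (w := b)
  omega

lemma Connected.exists_adj_between (hG : G.Connected) (h : a ≠ b) :
    ∃ z, G.Adj a z ∧ G.Between a z b := by
  obtain ⟨p, -, hp⟩ := hG.exists_path_of_dist a b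
  cases p with
  | nil => exact absurd rfl h
  | @cons _ z _ hadj q =>
    refine ⟨z, hadj, ?_⟩
    have := dist_le q
    have := hG.dist_triangle (u := a) (v := z) (w := b)
    rw [Walk.length_cons] at hp
    rw [Between, dist_eq_one_iff_adj.mpr hadj] at *
    omega

lemma IsTree.length_eq_dist (hT : G.IsTree) {p : G.Walk a b} (hp : p.IsPath) :
    p.length = G.dist a b := by
  obtain ⟨q, hq, hql⟩ := hT.connected.exists_path_of_dist a b
  rw [(hT.existsUnique_path a b).unique hp hq, hql]

lemma IsTree.mem_support_iff_between (hT : G.IsTree) {p : G.Walk a b} (hp : p.IsPath) :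
    x ∈ p.support ↔ G.Between a x b := by
  constructor
  · intro hx
    have := congrArg Walk.length (p.take_spec hx)
    rw [Walk.length_append, hT.length_eq_dist (hp.takeUntil hx),
      hT.length_eq_dist (hp.dropUntil hx), hT.length_eq_dist hp] at this
    exact this
  · intro hx
    obtain ⟨q₁, -, hq₁⟩ := hT.connected.exists_path_of_dist a x
    obtain ⟨q₂, -, hq₂⟩ := hT.connected.exists_path_of_dist x b
    have hq : (q₁.append q₂).length = G.dist a b := by
      rw [Walk.length_append, hq₁, hq₂, hx]
    rw [(hT.existsUnique_path a b).unique hp (Walk.isPath_of_length_eq_dist _ hq)]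
    simp [Walk.mem_support_append_iff]

lemma IsTree.between_total (hT : G.IsTree) (hx : G.Between a x b) (hy : G.Between a y b) :
    G.Between a x y ∨ G.Between a y x := by
  obtain ⟨p, hp, -⟩ := hT.connected.exists_path_of_dist a b
  have hy' := (hT.mem_support_iff_between hp).mpr hy
  have hx' := (hT.mem_support_iff_between hp).mpr hx
  rw [← p.take_spec hy', Walk.mem_support_append_iff] at hx'
  rcases hx' with hx' | hx'
  · exact .inl ((hT.mem_support_iff_between (hp.takeUntil hy')).mp hx')
  · have := (hT.mem_support_iff_between (hp.dropUntil hy')).mp hx'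
    unfold Between at *
    omega

lemma IsTree.between_of_dist_le (hT : G.IsTree) (hx : G.Between a x b) (hy : G.Between a y b)
    (h : G.dist a x ≤ G.dist a y) : G.Between a x y := by
  rcases hT.between_total hx hy with hxy | hyx
  · exact hxy
  · obtain rfl : y = x := hT.connected.dist_eq_zero_iff.mp (by unfold Between at hyx; omega)
    exact between_self_right a y

lemma IsTree.between_or_between_of_adj (hT : G.IsTree) (a : V) (h : G.Adj x y) :
    G.Between a x y ∨ G.Between a y x := by
  have hxy := dist_eq_one_iff_adj.mpr h
  have hyx := dist_eq_one_iff_adj.mpr h.symm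
  unfold Between
  rcases hT.dist_eq_dist_add_one_of_adj a h with h' | h' <;> omega

lemma IsTree.eq_of_adj_of_between (hT : G.IsTree) (hy : G.Adj y w) (hz : G.Adj z w)
    (hyw : G.Between r y w) (hzw : G.Between r z w) : y = z := by
  have hy1 := dist_eq_one_iff_adj.mpr hy
  have hz1 := dist_eq_one_iff_adj.mpr hz
  have hyz := hT.between_of_dist_le hyw hzw (by unfold Between at *; omega)
  exact hT.connected.dist_eq_zero_iff.mp (by unfold Between at *; omega)

lemma memLinkPath_iff : MemLinkPath G s(u, v) a ↔ G.Between u a v := by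
  constructor
  · rintro ⟨u', v', heq, h⟩
    rcases Sym2.eq_iff.mp heq with ⟨rfl, rfl⟩ | ⟨rfl, rfl⟩
    exacts [h, Between.symm h]
  · exact fun h => ⟨u, v, rfl, h⟩

lemma mk_mem_linkPath_iff :
    s(a, b) ∈ linkPath G s(u, v) ↔ G.Adj a b ∧ G.Between u a v ∧ G.Between u b v := by
  simp [linkPath, memLinkPath_iff]

lemma IsTree.linkPath_eq_union (hT : G.IsTree) (hm : G.Between u w v) :
    linkPath G s(u, v) = linkPath G s(u, w) ∪ linkPath G s(w, v) := by
  have hconn := hT.connected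
  have before {y : V} (hy : G.Between u y v) (h : G.dist u y ≤ G.dist u w) : G.Between u y w :=
    hT.between_of_dist_le hy hm h
  have after {y : V} (hy : G.Between u y v) (h : G.dist u w ≤ G.dist u y) : G.Between w y v :=
    (hconn.between_trans (hT.between_of_dist_le hm hy h) hy).2
  ext e
  induction e using Sym2.ind with
  | _ a b =>
    simp only [Set.mem_union, mk_mem_linkPath_iff]
    constructor
    · rintro ⟨hab, ha, hb⟩
      -- the positions of `a` and `b` along the path differ by one, so `w` cannot separate them
      have := hT.dist_eq_dist_add_one_of_adj u hab
      by_cases hw : G.dist u a ≤ G.dist u w ∧ G.dist u b ≤ G.dist u w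
      · exact .inl ⟨hab, before ha hw.1, before hb hw.2⟩
      · exact .inr ⟨hab, after ha (by omega), after hb (by omega)⟩
    · rintro (⟨hab, ha, hb⟩ | ⟨hab, ha, hb⟩)
      · exact ⟨hab, (hconn.between_trans ha hm).1, (hconn.between_trans hb hm).1⟩
      · exact ⟨hab, (hconn.between_trans ha.symm hm.symm).1.symm,
          (hconn.between_trans hb.symm hm.symm).1.symm⟩

lemma IsTree.not_shadowMinimalPair {u₁ x₁ u₂ x₂ : V} (hT : G.IsTree)
    (h₁ : G.Between u₁ r x₁) (hu₁ : u₁ ≠ r) (h₂ : G.Between u₂ r x₂) (h : G.Between r u₁ u₂) :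
    ¬ ShadowMinimalPair G s(u₁, x₁) s(u₂, x₂) := by
  have hsub : linkPath G s(u₁, r) ⊆ linkPath G s(u₂, x₂) := by
    rw [hT.linkPath_eq_union h₂, hT.linkPath_eq_union h.symm]
    exact Set.subset_union_right.trans Set.subset_union_left
  refine not_not.mpr ⟨s(r, x₁), fun heq => hu₁ (Sym2.congr_left.mp heq).symm, ?_, ?_⟩
  · simp [IsShadow, memLinkPath_iff, h₁]
  · rw [hT.linkPath_eq_union h₁, Set.union_comm (linkPath G s(u₁, r)), Set.union_assoc,
      Set.union_eq_self_of_subset_left hsub]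

lemma IsTree.memPrincipal_of_between (hT : G.IsTree) (hc : G.Adj r c) (hw : G.Between r c w)
    (hz : G.Between r z w) : MemPrincipal G r c z := by
  rcases hT.between_total hw hz with hcz | hzc
  · exact .inr hcz
  · have := dist_eq_one_iff_adj.mpr hc
    unfold Between at hzc
    rcases Nat.eq_zero_or_pos (G.dist r z) with h0 | hpos
    · exact .inl (hT.connected.dist_eq_zero_iff.mp h0).symm
    · obtain rfl : z = c := hT.connected.dist_eq_zero_iff.mp (by omega)
      exact .inr (between_self_right r z)

lemma IsTree.between_of_adj_of_between (hT : G.IsTree) (hc : G.Adj r c)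
    (hy : G.Between r c y) (h : G.Adj y z) (hz : z ≠ r) : G.Between r c z := by
  rcases hT.between_or_between_of_adj r h with hyz | hzy
  · exact (hT.connected.between_trans hy hyz).1
  · exact (hT.memPrincipal_of_between hc hy hzy).resolve_left hz

lemma IsTree.between_of_walk (hT : G.IsTree) (hc : G.Adj r c) (p : G.Walk y x)
    (hr : r ∉ p.support) (hy : G.Between r c y) : G.Between r c x := by
  induction p with
  | nil => exact hy
  | cons h q ih =>
    rw [Walk.support_cons, List.mem_cons, not_or] at hr
    exact ih hr.2 (hT.between_of_adj_of_between hc hy h fun h' => hr.2 (h' ▸ q.start_mem_support))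

lemma IsTree.between_of_not_sameSubtree (hT : G.IsTree) (hu : u ≠ r)
    (h : ¬ SameSubtree G r u x) : G.Between u r x := by
  obtain ⟨p, hp, -⟩ := hT.connected.exists_path_of_dist u x
  by_contra hr
  rw [← hT.mem_support_iff_between hp] at hr
  obtain ⟨c, hc, hcu⟩ := hT.connected.exists_adj_between hu.symm
  exact h ⟨c, hc, .inr hcu, .inr (hT.between_of_walk hc p hr hcu)⟩

lemma IsTree.exists_eq_of_isCrossLink (hT : G.IsTree) {ℓ : Sym2 V} (hℓ : IsCrossLink G r ℓ)
    (hv : v ∈ ℓ) : ∃ x, ℓ = s(v, x) ∧ G.Between v r x := by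
  obtain ⟨u, x, rfl, hu, hx, h⟩ := hℓ
  rcases Sym2.mem_iff.mp hv with rfl | rfl
  · exact ⟨x, rfl, hT.between_of_not_sameSubtree hu h⟩
  · exact ⟨u, Sym2.eq_swap,
      hT.between_of_not_sameSubtree hx fun ⟨c, hc, h₁, h₂⟩ => h ⟨c, hc, h₂, h₁⟩⟩

def ChargedTo (G : SimpleGraph V) (r : V) (ℓ : Sym2 V) (w : V) : Prop :=
  ∃ u x, ℓ = s(u, x) ∧ u ≠ r ∧ G.Between u r x ∧ G.Between r u w

lemma IsTree.subsingleton_chargedTo (hT : G.IsTree) {L' : Finset (Sym2 V)}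
    (hMin : ShadowMinimalSet G L') (w : V) : {ℓ | ℓ ∈ L' ∧ G.ChargedTo r ℓ w}.Subsingleton := by
  rintro _ ⟨h₁, u₁, x₁, rfl, hu₁, hr₁, hw₁⟩ _ ⟨h₂, u₂, x₂, rfl, hu₂, hr₂, hw₂⟩
  by_contra hne
  rcases hT.between_total hw₁ hw₂ with h | h
  · exact hT.not_shadowMinimalPair hr₁ hu₁ hr₂ h (hMin _ h₁ _ h₂ hne)
  · exact hT.not_shadowMinimalPair hr₂ hu₂ hr₁ h (hMin _ h₂ _ h₁ (Ne.symm hne))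

variable [Fintype V]

lemma IsTree.mem_principalLeaves (hT : G.IsTree) (hc : G.Adj r c) (hw : G.Between r c w)
    (hmax : ∀ y, G.Adj w y → ¬ G.Between r w y) : w ∈ principalLeaves G r c := by
  have hwr : w ≠ r := by
    rintro rfl
    have := dist_eq_one_iff_adj.mpr hc
    rw [Between, dist_self] at hw
    omega
  obtain ⟨z, hwz, hz⟩ := hT.connected.exists_adj_between hwr
  have hparent : {y ∈ principalVerts G r c | G.Adj w y} = {z} := by
    ext y
    simp only [principalVerts, Finset.mem_filter, Finset.mem_univ, true_and,
      Finset.mem_singleton]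
    constructor
    · rintro ⟨-, hwy⟩
      have hyw := (hT.between_or_between_of_adj r hwy).resolve_left (hmax y hwy)
      exact hT.eq_of_adj_of_between hwy.symm hwz.symm hyw hz.symm
    · rintro rfl
      exact ⟨hT.memPrincipal_of_between hc hw hz.symm, hwz⟩
  rw [principalLeaves, Finset.mem_filter, hparent]
  exact ⟨Finset.mem_filter.mpr ⟨Finset.mem_univ w, .inr hw⟩, Finset.card_singleton z⟩

lemma IsTree.exists_mem_principalLeaves_between (hT : G.IsTree) (hc : G.Adj r c)
    (hu : G.Between r c u) : ∃ w ∈ principalLeaves G r c, G.Between r u w := by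
  obtain ⟨w, hw, hmax⟩ :=
    Finset.exists_max_image {w | G.Between r u w} (G.dist r) ⟨u, by simp⟩
  rw [Finset.mem_filter_univ] at hw
  refine ⟨w, hT.mem_principalLeaves hc (hT.connected.between_trans hu hw).1 fun y hwy hy => ?_, hw⟩
  have := hmax y (by simpa using (hT.connected.between_trans hw hy).1)
  have := dist_eq_one_iff_adj.mpr hwy
  unfold Between at hy
  omega

end SimpleGraph

theorem stmt_11_general {V : Type} [Fintype V] [DecidableEq V]
    (G : SimpleGraph V) (hT : G.IsTree)
    (r : V) (k : ℕ) (hWide : KWide G r k)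
    (L' : Finset (Sym2 V)) (hMin : ShadowMinimalSet G L')
    (c : V) (hc : G.Adj r c) :
    (L'.filter (fun ℓ => IsCrossLink G r ℓ ∧
        ∃ v ∈ ℓ, v ≠ r ∧ MemPrincipal G r c v)).card ≤ k := by
  refine (Finset.card_le_card_of_forall_subsingleton (G.ChargedTo r) ?_ ?_).trans (hWide c hc)
  · intro ℓ hℓ
    obtain ⟨-, hcross, v, hv, hvr, hvc⟩ := Finset.mem_filter.mp hℓ
    obtain ⟨x, rfl, hvx⟩ := hT.exists_eq_of_isCrossLink hcross hv
    obtain ⟨w, hw, hvw⟩ := hT.exists_mem_principalLeaves_between hc (hvc.resolve_left hvr)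
    exact ⟨w, hw, v, x, rfl, hvr, hvx, hvw⟩
  · intro w _
    exact (hT.subsingleton_chargedTo hMin w).anti fun ℓ hℓ =>
      ⟨(Finset.mem_filter.mp hℓ.1).1, hℓ.2⟩

/-- If `T` is a `k`-wide tree with root `r` and `L' ⊆ L` is shadow-minimal,
then for every principal subtree (indexed by a child `c` of `r`), at most `k` cross-links
of `L'` have an endpoint inside that subtree (different from `r`). -/
theorem stmt_11 {V : Type} [Fintype V] [DecidableEq V]
    (G : SimpleGraph V) (hT : G.IsTree)
    (r : V) (k : ℕ) (hWide : KWide G r k)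
    (L L' : Finset (Sym2 V)) (hLlinks : ∀ ℓ ∈ L, ¬ ℓ.IsDiag)
    (hL' : L' ⊆ L) (hMin : ShadowMinimalSet G L')
    (c : V) (hc : G.Adj r c) :
    (L'.filter (fun ℓ => IsCrossLink G r ℓ ∧
        ∃ v ∈ ℓ, v ≠ r ∧ MemPrincipal G r c v)).card ≤ k :=
  stmt_11_general G hT r k hWide L' hMin c hc
end

section
/- Let (T,L) be a TAP instance where T is a k-wide tree with root r, let K be the number of leaves of T that are different from r, and let x ∈ [0,1]^L satisfy ∑_{ℓ ∈ cov(e)} x_ℓ ≥ 1 for every edge e of T. Then 2·∑_{ℓ∈L} x_ℓ − ∑_{ℓ ∈ L_up} x_ℓ − ∑_{ℓ ∈ L_cross^{no-crit}} x_ℓ ≥ K, where L_up is the set of up-links and L_cross^{no-crit} is the set of cross-links having at least one endpoint of degree 2 in T. -/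
/-! A leaf `v ≠ r` can only be covered by links ending at `v`, since every interior vertex of a
tree path has degree at least 2; so the links incident to `v` carry `x`-weight at least 1.
Counting these incidences link by link, a link contains at most two leaves, and at most one if
it is an up-link (its upper endpoint is `r` or an interior vertex of a path from `r`) or a
non-critical cross-link (one endpoint has degree 2); up-links are in-links, hence never
cross-links. -/

open scoped Classical

/-- `ℓ` is an in-link with respect to the root `r`. -/
def IsInLink {V : Type} (G : SimpleGraph V) (r : V) (ℓ : Sym2 V) : Prop :=
  ∃ u v : V, ℓ = s(u, v) ∧ SameSubtree G r u v

/-- `ℓ` is an up-link with respect to the root `r`: an in-link `{u,v}` such that `u` lies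
on the path in `T` from `r` to `v`. -/
def IsUpLink {V : Type} (G : SimpleGraph V) (r : V) (ℓ : Sym2 V) : Prop :=
  IsInLink G r ℓ ∧ ∃ u v : V, ℓ = s(u, v) ∧ G.dist r u + G.dist u v = G.dist r v


namespace SimpleGraph

variable {V : Type} {G : SimpleGraph V}

lemma Connected.exists_adj_dist_lt (hG : G.Connected) {u v : V} (huv : u ≠ v) :
    ∃ a, G.Adj v a ∧ G.dist a u < G.dist v u := by
  obtain ⟨p, hp⟩ := hG.exists_walk_length_eq_dist v u
  obtain ⟨a, hva, p', rfl⟩ := p.exists_eq_cons_of_ne huv.symm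
  refine ⟨a, hva, ?_⟩
  calc G.dist a u ≤ p'.length := dist_le p'
    _ < (Walk.cons hva p').length := by simp
    _ = G.dist v u := hp

/-- A neighbour of `v` closer to `u` and one closer to `w` must differ, since `v` lies on a
geodesic from `u` to `w`. -/
lemma Connected.two_le_degree_of_dist_add_dist_eq [Fintype V] [DecidableRel G.Adj]
    (hG : G.Connected) {u v w : V} (huv : u ≠ v) (hvw : v ≠ w)
    (h : G.dist u v + G.dist v w = G.dist u w) : 2 ≤ G.degree v := by
  obtain ⟨a, hva, hau⟩ := hG.exists_adj_dist_lt huv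
  obtain ⟨b, hvb, hbw⟩ := hG.exists_adj_dist_lt hvw.symm
  have hab : a ≠ b := by
    rintro rfl
    have := hG.dist_triangle (u := u) (v := a) (w := w)
    rw [dist_comm (u := u) (v := a), dist_comm (u := u) (v := v)] at *
    omega
  rw [← card_neighborFinset_eq_degree, Nat.succ_le_iff, Finset.one_lt_card]
  exact ⟨a, (mem_neighborFinset ..).2 hva, b, (mem_neighborFinset ..).2 hvb, hab⟩

lemma Connected.mem_of_memLinkPath [Fintype V] [DecidableRel G.Adj] (hG : G.Connected)
    {ℓ : Sym2 V} {a : V} (ha : MemLinkPath G ℓ a) (hdeg : G.degree a < 2) : a ∈ ℓ := by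
  obtain ⟨u, v, rfl, h⟩ := ha
  by_contra hmem
  rw [Sym2.mem_iff, not_or] at hmem
  exact hdeg.not_ge (hG.two_le_degree_of_dist_add_dist_eq (Ne.symm hmem.1) hmem.2 h)

end SimpleGraph

open SimpleGraph Finset

lemma not_isInLink_of_isCrossLink {V : Type} {G : SimpleGraph V} {r : V} {ℓ : Sym2 V}
    (hcross : IsCrossLink G r ℓ) : ¬ IsInLink G r ℓ := by
  rintro ⟨u, v, rfl, c, hc, hu, hv⟩
  obtain ⟨u', v', he, -, -, hns⟩ := hcross
  rcases Sym2.eq_iff.mp he with ⟨rfl, rfl⟩ | ⟨rfl, rfl⟩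
  · exact hns ⟨c, hc, hu, hv⟩
  · exact hns ⟨c, hc, hv, hu⟩

lemma Finset.card_filter_mem_sym2_le_two {V : Type} [DecidableEq V] (S : Finset V)
    (ℓ : Sym2 V) : #{v ∈ S | v ∈ ℓ} ≤ 2 := by
  induction ℓ using Sym2.ind with
  | _ u v =>
    calc #{z ∈ S | z ∈ s(u, v)} ≤ #({u, v} : Finset V) :=
          Finset.card_le_card fun z hz => by simpa using (Finset.mem_filter.mp hz).2
      _ ≤ 2 := Finset.card_le_two

lemma Finset.card_filter_mem_sym2_le_one {V : Type} [DecidableEq V] {S : Finset V} {u v : V}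
    (h : u ∈ S → u = v) : #{z ∈ S | z ∈ s(u, v)} ≤ 1 := by
  refine Finset.card_le_one.mpr fun a ha b hb => ?_
  simp only [Finset.mem_filter, Sym2.mem_iff] at ha hb
  obtain ⟨haS, rfl | rfl⟩ := ha <;> obtain ⟨hbS, rfl | rfl⟩ := hb <;> grind

section LeafCounting

variable {V : Type} [Fintype V] [DecidableEq V] {G : SimpleGraph V} [DecidableRel G.Adj]

lemma one_le_sum_filter_mem_of_degree_eq_one (hG : G.Connected) {L : Finset (Sym2 V)}
    {x : Sym2 V → ℝ} (hx : ∀ ℓ ∈ L, 0 ≤ x ℓ)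
    (hCover : ∀ e ∈ G.edgeSet, 1 ≤ ∑ ℓ ∈ L with e ∈ linkPath G ℓ, x ℓ)
    {v : V} (hv : G.degree v = 1) : 1 ≤ ∑ ℓ ∈ L with v ∈ ℓ, x ℓ := by
  obtain ⟨w, hw⟩ := G.degree_pos_iff_exists_adj v |>.mp (by omega)
  refine (hCover s(v, w) hw).trans
    (sum_le_sum_of_subset_of_nonneg ?_ fun ℓ hℓ _ => hx ℓ (mem_filter.mp hℓ).1)
  exact monotone_filter_right L fun ℓ _ hℓ =>
    hG.mem_of_memLinkPath (hℓ.2 v (Sym2.mem_mk_left v w)) (by omega)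

lemma card_filter_mem_add_ite_add_ite_le_two (hG : G.Connected) {r : V} {S : Finset V}
    (hS : ∀ v ∈ S, G.degree v = 1 ∧ v ≠ r) (ℓ : Sym2 V) :
    #{v ∈ S | v ∈ ℓ} + (if IsUpLink G r ℓ then 1 else 0)
      + (if IsCrossLink G r ℓ ∧ ∃ v ∈ ℓ, G.degree v = 2 then 1 else 0) ≤ 2 := by
  by_cases hup : IsUpLink G r ℓ
  · rw [if_pos hup, if_neg fun h => not_isInLink_of_isCrossLink h.1 hup.1]
    obtain ⟨-, u, v, rfl, hd⟩ := hup
    have : #{z ∈ S | z ∈ s(u, v)} ≤ 1 := card_filter_mem_sym2_le_one fun hu => by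
      by_contra huv
      have := hG.two_le_degree_of_dist_add_dist_eq (hS u hu).2.symm huv hd
      have := (hS u hu).1
      omega
    omega
  · by_cases hcross : IsCrossLink G r ℓ ∧ ∃ v ∈ ℓ, G.degree v = 2
    · rw [if_neg hup, if_pos hcross]
      obtain ⟨-, a, ha, hdeg⟩ := hcross
      obtain ⟨b, rfl⟩ := Sym2.mem_iff_exists.mp ha
      have : #{z ∈ S | z ∈ s(a, b)} ≤ 1 :=
        card_filter_mem_sym2_le_one fun haS => by have := (hS a haS).1; omega
      omega
    · simpa [hup, hcross] using card_filter_mem_sym2_le_two S ℓ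

end LeafCounting

theorem stmt_14_general {V : Type} [Fintype V] [DecidableEq V]
    (G : SimpleGraph V) [DecidableRel G.Adj] (hT : G.IsTree)
    (r : V)
    (L : Finset (Sym2 V))
    (x : Sym2 V → ℝ) (hx : ∀ ℓ ∈ L, 0 ≤ x ℓ ∧ x ℓ ≤ 1)
    (hCover : ∀ e ∈ G.edgeSet, 1 ≤ ∑ ℓ ∈ L.filter (fun ℓ => e ∈ linkPath G ℓ), x ℓ) :
    ((((Finset.univ : Finset V).filter (fun v => G.degree v = 1 ∧ v ≠ r)).card : ℝ)
      ≤ 2 * (∑ ℓ ∈ L, x ℓ)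
        - (∑ ℓ ∈ L.filter (fun ℓ => IsUpLink G r ℓ), x ℓ)
        - (∑ ℓ ∈ L.filter (fun ℓ => IsCrossLink G r ℓ ∧ ∃ v ∈ ℓ, G.degree v = 2),
            x ℓ)) := by
  set S := (Finset.univ : Finset V).filter (fun v => G.degree v = 1 ∧ v ≠ r)
  have hS : ∀ v ∈ S, G.degree v = 1 ∧ v ≠ r := fun v hv => (mem_filter.mp hv).2
  have hx0 : ∀ ℓ ∈ L, 0 ≤ x ℓ := fun ℓ hℓ => (hx ℓ hℓ).1
  calc (#S : ℝ) = ∑ _v ∈ S, 1 := by simp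
    _ ≤ ∑ v ∈ S, ∑ ℓ ∈ L with v ∈ ℓ, x ℓ := sum_le_sum fun v hv =>
        one_le_sum_filter_mem_of_degree_eq_one hT.connected hx0 hCover (hS v hv).1
    _ = ∑ ℓ ∈ L, #{v ∈ S | v ∈ ℓ} * x ℓ := by
        rw [sum_comm' (t' := L) (s' := fun ℓ => {v ∈ S | v ∈ ℓ}) (by grind)]
        simp only [sum_const, nsmul_eq_mul]
    _ ≤ ∑ ℓ ∈ L, (2 * x ℓ - (if IsUpLink G r ℓ then x ℓ else 0)
          - (if IsCrossLink G r ℓ ∧ ∃ v ∈ ℓ, G.degree v = 2 then x ℓ else 0)) := by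
        refine sum_le_sum fun ℓ hℓ => ?_
        have := card_filter_mem_add_ite_add_ite_le_two hT.connected hS ℓ
        have hcast : (#{v ∈ S | v ∈ ℓ} : ℝ) + (if IsUpLink G r ℓ then 1 else 0)
            + (if IsCrossLink G r ℓ ∧ ∃ v ∈ ℓ, G.degree v = 2 then 1 else 0) ≤ 2 := by
          exact_mod_cast this
        split_ifs at hcast ⊢ <;> nlinarith [hx0 ℓ hℓ]
    _ = _ := by simp only [sum_sub_distrib, mul_sum, sum_filter]

/-- Let `(T,L)` be a TAP instance on a `k`-wide tree with root `r`, let `K`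
be the number of leaves of `T` different from `r`, and let `x ∈ [0,1]^L` fractionally
cover every edge of `T`. Then `2·x(L) − x(L_up) − x(L_cross^{no-crit}) ≥ K`, where
`L_cross^{no-crit}` are the cross-links with an endpoint of degree 2 in `T`. -/
theorem stmt_14 {V : Type} [Fintype V] [DecidableEq V]
    (G : SimpleGraph V) [DecidableRel G.Adj] (hT : G.IsTree)
    (r : V) (k : ℕ) (hWide : KWide G r k)
    (L : Finset (Sym2 V)) (hLlinks : ∀ ℓ ∈ L, ¬ ℓ.IsDiag)
    (x : Sym2 V → ℝ) (hx : ∀ ℓ ∈ L, 0 ≤ x ℓ ∧ x ℓ ≤ 1)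
    (hCover : ∀ e ∈ G.edgeSet, 1 ≤ ∑ ℓ ∈ L.filter (fun ℓ => e ∈ linkPath G ℓ), x ℓ) :
    ((((Finset.univ : Finset V).filter (fun v => G.degree v = 1 ∧ v ≠ r)).card : ℝ)
      ≤ 2 * (∑ ℓ ∈ L, x ℓ)
        - (∑ ℓ ∈ L.filter (fun ℓ => IsUpLink G r ℓ), x ℓ)
        - (∑ ℓ ∈ L.filter (fun ℓ => IsCrossLink G r ℓ ∧ ∃ v ∈ ℓ, G.degree v = 2),
            x ℓ)) :=
  stmt_14_general G hT r L x hx hCover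
end

section
/- Let n ≥ 2 and let G=(V,E) be the star graph on n vertices with center c ∈ V and n−1 leaves. Define x_e = 1/(n−1) for every edge e ∈ E, and let A be the random subset of V that equals V with probability 1/(n−1) and equals {c} with probability (n−2)/(n−1). Then (i) Pr[v ∈ A] = ∑_{e ∈ δ(v)} x_e for every v ∈ V, (ii) Pr[u ∈ A and v ∈ A] = Pr[u ∈ A] · Pr[v ∈ A] for every edge {u,v} ∈ E, and (iii) the expected maximum matching size of the subgraph of G induced by A equals 1/(n−1), whereas (∑_{e ∈ E} x_e)²/|V| = 1/n. -/
open scoped Classical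
open Finset

/-!
The star is a tree with `n - 1` edges, all through the centre `c`, so every matching in it has
at most one edge; `c` has degree `n - 1` and every leaf has degree `1`. The centre lies in both
possible values of `A`, so `Pr[c ∈ A] = 1`, while every event involving a leaf has probability
`Pr[A = V] = 1/(n-1)`; this gives the marginals and the independence along edges. The induced
matching number is `1` on `V` and `0` on `{c}`, so its expectation is `1/(n-1)`.
-/

/-- The maximum cardinality of a matching in the subgraph of `G` induced by the vertex
set `S`. -/
noncomputable def inducedMatchingNumber {V : Type} [Fintype V] [DecidableEq V]
    (G : SimpleGraph V) [DecidableRel G.Adj] (S : Finset V) : ℕ :=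
  ((G.edgeFinset.filter (fun e => ∀ v ∈ e, v ∈ S)).powerset.filter
      (fun M => ∀ e ∈ M, ∀ f ∈ M, e ≠ f → ∀ v : V, v ∈ e → v ∉ f)).sup Finset.card

/-- The distribution of the random subset `A` of `V`: it equals `V` with probability
`1/(n−1)` and `{c}` with probability `(n−2)/(n−1)`. -/
noncomputable def starDist {V : Type} [Fintype V] [DecidableEq V] (c : V) (n : ℕ) :
    Finset V → ℝ := fun S =>
  if S = Finset.univ then 1 / ((n : ℝ) - 1)
  else if S = {c} then ((n : ℝ) - 2) / ((n : ℝ) - 1) else 0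

namespace SimpleGraph

variable {V : Type} [Fintype V]

section InducedMatchingNumber

variable [DecidableEq V] (G : SimpleGraph V) [DecidableRel G.Adj]

lemma inducedMatchingNumber_singleton (v : V) : inducedMatchingNumber G {v} = 0 := by
  have hno_edge : G.edgeFinset.filter (fun e => ∀ w ∈ e, w ∈ ({v} : Finset V)) = ∅ := by
    refine filter_eq_empty_iff.2 fun e he hev => G.not_isDiag_of_mem_edgeSet
      (mem_edgeFinset.1 he) ?_
    induction e using Sym2.ind with
    | _ a b => simp_all
  rw [inducedMatchingNumber, hno_edge]
  simp

lemma one_le_inducedMatchingNumber {S : Finset V} {u v : V} (huv : G.Adj u v) (hu : u ∈ S)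
    (hv : v ∈ S) : 1 ≤ inducedMatchingNumber G S := by
  have hM : {s(u, v)} ∈ ((G.edgeFinset.filter (fun e => ∀ w ∈ e, w ∈ S)).powerset.filter
      (fun M => ∀ e ∈ M, ∀ f ∈ M, e ≠ f → ∀ w : V, w ∈ e → w ∉ f)) := by
    simp_all
  exact (card_singleton _).symm.le.trans (Finset.le_sup hM)

/-- All edges of a matching through a common vertex coincide. -/
lemma inducedMatchingNumber_le_one {c : V} (hc : ∀ e ∈ G.edgeFinset, c ∈ e) (S : Finset V) :
    inducedMatchingNumber G S ≤ 1 := by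
  refine Finset.sup_le fun M hM => card_le_one.2 fun e he f hf => ?_
  simp only [mem_filter, mem_powerset, subset_iff] at hM
  by_contra hef
  exact hM.2 e he f hf hef c (hc e (hM.1 he).1) (hc f (hM.1 hf).1)

end InducedMatchingNumber

section StarGraph

variable (c : V) [DecidableRel (starGraph c).Adj]

lemma center_mem_of_mem_edgeFinset_starGraph {e : Sym2 V} (he : e ∈ (starGraph c).edgeFinset) :
    c ∈ e := by
  induction e using Sym2.ind with
  | _ a b =>
    rw [mem_edgeFinset, mem_edgeSet, starGraph_adj] at he
    rcases he.2 with rfl | rfl <;> simp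

lemma card_incident_edges_starGraph_center [DecidableEq V] :
    #((starGraph c).edgeFinset.filter (c ∈ ·)) = Fintype.card V - 1 := by
  rw [← incidenceFinset_eq_filter, card_incidenceFinset_eq_degree]
  convert degree_starGraph_center (r := c)

lemma card_incident_edges_starGraph_of_ne [DecidableEq V] {v : V} (hv : v ≠ c) :
    #((starGraph c).edgeFinset.filter (v ∈ ·)) = 1 := by
  rw [← incidenceFinset_eq_filter, card_incidenceFinset_eq_degree]
  convert degree_starGraph_of_ne_center hv

lemma card_edgeFinset_starGraph : #(starGraph c).edgeFinset = Fintype.card V - 1 := by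
  have := (isTree_starGraph c).card_edgeFinset
  omega

lemma inducedMatchingNumber_starGraph_univ [DecidableEq V] [Nontrivial V] :
    inducedMatchingNumber (starGraph c) univ = 1 := by
  obtain ⟨v, hv⟩ := exists_ne c
  exact le_antisymm
    (inducedMatchingNumber_le_one _ (fun _ => center_mem_of_mem_edgeFinset_starGraph c) _)
    (one_le_inducedMatchingNumber _ (starGraph_center_adj hv.symm) (mem_univ c) (mem_univ v))

end StarGraph

end SimpleGraph

open SimpleGraph

section StarDist

variable {V : Type} [Fintype V] [Nontrivial V] (c : V) (n : ℕ)

lemma Finset.univ_ne_singleton : (univ : Finset V) ≠ {c} := fun h => by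
  obtain ⟨v, hv⟩ := exists_ne c
  exact hv (mem_singleton.1 (h ▸ mem_univ v))

variable [DecidableEq V]

lemma sum_starDist_mul (T : Finset (Finset V)) (f : Finset V → ℝ) :
    ∑ S ∈ T, starDist c n S * f S
      = (if univ ∈ T then 1 / ((n : ℝ) - 1) * f univ else 0)
        + (if {c} ∈ T then ((n : ℝ) - 2) / ((n : ℝ) - 1) * f {c} else 0) := by
  rw [← sum_ite_eq' T univ (fun S => 1 / ((n : ℝ) - 1) * f S),
    ← sum_ite_eq' T {c} (fun S => ((n : ℝ) - 2) / ((n : ℝ) - 1) * f S), ← sum_add_distrib]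
  refine sum_congr rfl fun S _ => ?_
  have := univ_ne_singleton c
  by_cases h₁ : S = univ
  · simp_all [starDist]
  · by_cases h₂ : S = {c} <;> simp_all [starDist, eq_comm]

lemma sum_filter_starDist (P : Finset V → Prop) [DecidablePred P] :
    ∑ S ∈ univ.filter P, starDist c n S
      = (if P univ then 1 / ((n : ℝ) - 1) else 0)
        + (if P {c} then ((n : ℝ) - 2) / ((n : ℝ) - 1) else 0) := by
  simpa using sum_starDist_mul c n (univ.filter P) 1

lemma sum_filter_mem_center_starDist (hn : (n : ℝ) ≠ 1) :
    ∑ S ∈ univ.filter (c ∈ ·), starDist c n S = 1 := by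
  rw [sum_filter_starDist]
  simp only [mem_univ, mem_singleton, if_true]
  field_simp [sub_ne_zero.2 hn]
  ring

lemma sum_filter_mem_starDist_of_ne {v : V} (hv : v ≠ c) :
    ∑ S ∈ univ.filter (v ∈ ·), starDist c n S = 1 / ((n : ℝ) - 1) := by
  simp [sum_filter_starDist, hv]

lemma sum_filter_mem_mem_starDist {u v : V} (huv : u ≠ v) :
    ∑ S ∈ univ.filter (fun S => u ∈ S ∧ v ∈ S), starDist c n S = 1 / ((n : ℝ) - 1) := by
  rw [sum_filter_starDist]
  simp only [mem_univ, and_self, if_true, mem_singleton]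
  rw [if_neg (fun h => huv (h.1.trans h.2.symm)), add_zero]

lemma sum_filter_mem_mem_starDist_eq_mul (hn : (n : ℝ) ≠ 1) {u v : V} (huv : u ≠ v)
    (hc : u = c ∨ v = c) :
    ∑ S ∈ univ.filter (fun S => u ∈ S ∧ v ∈ S), starDist c n S
      = (∑ S ∈ univ.filter (u ∈ ·), starDist c n S)
        * ∑ S ∈ univ.filter (v ∈ ·), starDist c n S := by
  rw [sum_filter_mem_mem_starDist c n huv]
  rcases hc with rfl | rfl
  · rw [sum_filter_mem_center_starDist _ _ hn, sum_filter_mem_starDist_of_ne _ _ huv.symm,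
      one_mul]
  · rw [sum_filter_mem_center_starDist _ _ hn, sum_filter_mem_starDist_of_ne _ _ huv, mul_one]

end StarDist

/-- Let `G` be the star on `n ≥ 2` vertices with center `c`, let
`x_e = 1/(n−1)` on every edge, and let `A` be the random subset of `V` equal to `V` with
probability `1/(n−1)` and to `{c}` with probability `(n−2)/(n−1)`. Then (i) the marginals
of `A` match `x(δ(v))`, (ii) endpoints of every edge are independent, and (iii) the
expected maximum matching size of the subgraph induced by `A` equals `1/(n−1)`, whereas
`x(E)²/|V| = 1/n`. -/
theorem stmt_15 {V : Type} [Fintype V] [DecidableEq V] (n : ℕ) (hn : 2 ≤ n)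
    (hcard : Fintype.card V = n) (c : V)
    (G : SimpleGraph V) [DecidableRel G.Adj]
    (hstar : ∀ u v : V, G.Adj u v ↔ ((u = c ∧ v ≠ c) ∨ (v = c ∧ u ≠ c))) :
    (∀ v : V,
      ∑ S ∈ (Finset.univ : Finset (Finset V)).filter (fun S => v ∈ S), starDist c n S
        = ∑ e ∈ G.edgeFinset.filter (fun e => v ∈ e), (1 / ((n : ℝ) - 1))) ∧
    (∀ u v : V, G.Adj u v →
      ∑ S ∈ (Finset.univ : Finset (Finset V)).filter (fun S => u ∈ S ∧ v ∈ S),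
          starDist c n S
        = (∑ S ∈ (Finset.univ : Finset (Finset V)).filter (fun S => u ∈ S),
            starDist c n S)
          * (∑ S ∈ (Finset.univ : Finset (Finset V)).filter (fun S => v ∈ S),
              starDist c n S)) ∧
    (∑ S : Finset V, starDist c n S * (inducedMatchingNumber G S : ℝ)
      = 1 / ((n : ℝ) - 1)) ∧
    ((∑ e ∈ G.edgeFinset, (1 / ((n : ℝ) - 1))) ^ 2 / (Fintype.card V : ℝ)
      = 1 / (n : ℝ)) := by
  have : Nontrivial V := Fintype.one_lt_card_iff_nontrivial.1 (by omega)
  have hn₁' : (n : ℝ) ≠ 1 := by exact_mod_cast (show n ≠ 1 by omega)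
  have hn₁ : (n : ℝ) - 1 ≠ 0 := sub_ne_zero.2 hn₁'
  have hG : G = starGraph c := by
    ext u v
    rw [hstar, starGraph_adj]
    grind
  subst hG
  refine ⟨fun v => ?_, fun u v huv => ?_, ?_, ?_⟩
  · rw [sum_const, nsmul_eq_mul]
    by_cases hv : v = c
    · rw [hv, sum_filter_mem_center_starDist _ _ hn₁', card_incident_edges_starGraph_center,
        hcard, Nat.cast_pred (by omega), mul_one_div_cancel hn₁]
    · rw [sum_filter_mem_starDist_of_ne _ _ hv, card_incident_edges_starGraph_of_ne _ hv,
        Nat.cast_one, one_mul]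
  · rw [starGraph_adj] at huv
    exact sum_filter_mem_mem_starDist_eq_mul c n hn₁' huv.1 huv.2
  · rw [sum_starDist_mul, inducedMatchingNumber_starGraph_univ,
      inducedMatchingNumber_singleton]
    simp
  · have : (n : ℝ) ≠ 0 := by positivity
    rw [sum_const, nsmul_eq_mul, card_edgeFinset_starGraph, hcard, Nat.cast_pred (by omega)]
    field_simp
end
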